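/- arXiv:2005.02346 — 2 statements merged into one kernel-verified Lean document; each statement's English description precedes it below -/
import Mathlib

section
/- Let p be an odd prime, let 𝒢 be the GGS-group with constant defining vector (1,...,1), and let K be the normal closure in 𝒢 of the conjugates (b a^{-1})^{a^i} for 0 ≤ i ≤ p-1. Then the commutator subgroup K' is contained in st_{Aut T}(1), ψ(K') is a subdirect product of K × ... × K (p factors), i.e. ψ(K') ≤ K × ... × K and each of the p coordinate projections of ψ(K') is all of K; moreover ψ(K'') contains γ₃(K) × ... × γ₃(K), where γ₃(K) is the third term of the lower central series of K. -/
open List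

/-- The automorphism group of the `p`-adic rooted tree: vertices are finite words
over the alphabet `ZMod p` (the letter `i ∈ {1,…,p-1}` is `i` and the letter `p` is `0`),
and automorphisms are the permutations of the vertex set preserving word length and
the prefix relation. -/
def AutT (p : ℕ) : Subgroup (Equiv.Perm (List (ZMod p))) where
  carrier := {σ | (∀ v, (σ v).length = v.length) ∧
      ∀ u v : List (ZMod p), u <+: v → σ u <+: σ v}
  one_mem' := ⟨fun _ => rfl, fun _ _ h => h⟩
  mul_mem' := by
    rintro σ τ ⟨hσ1, hσ2⟩ ⟨hτ1, hτ2⟩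
    refine ⟨fun v => ?_, fun u v h => ?_⟩
    · simp only [Equiv.Perm.mul_apply, hσ1, hτ1]
    · simpa only [Equiv.Perm.mul_apply] using hσ2 _ _ (hτ2 _ _ h)
  inv_mem' := by
    rintro σ ⟨h1, h2⟩
    have hlen : ∀ v, (σ⁻¹ v).length = v.length := by
      intro v
      have := h1 (σ⁻¹ v)
      rw [show σ (σ⁻¹ v) = v from Equiv.apply_symm_apply σ v] at this
      exact this.symm
    refine ⟨hlen, fun u v huv => ?_⟩
    have hle : u.length ≤ (σ⁻¹ v).length := by
      rw [hlen]; exact huv.length_le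
    have htake : (σ⁻¹ v).take u.length <+: σ⁻¹ v := List.take_prefix _ _
    have h3 : σ ((σ⁻¹ v).take u.length) <+: v := by
      have := h2 _ _ htake
      rwa [show σ (σ⁻¹ v) = v from Equiv.apply_symm_apply σ v] at this
    have hlen2 : (σ ((σ⁻¹ v).take u.length)).length = u.length := by
      rw [h1, List.length_take]
      omega
    have heq : σ ((σ⁻¹ v).take u.length) = u := by
      refine List.IsPrefix.eq_of_length ?_ (by rw [hlen2])
      exact List.prefix_of_prefix_length_le h3 huv (by rw [hlen2])
    have h4 : σ⁻¹ u = (σ⁻¹ v).take u.length := by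
      conv_lhs => rw [← heq]
      exact Equiv.symm_apply_apply _ _
    rw [h4]; exact htake

lemma mem_AutT_iff {p : ℕ} {σ : Equiv.Perm (List (ZMod p))} :
    σ ∈ AutT p ↔ (∀ v, (σ v).length = v.length) ∧
      ∀ u v : List (ZMod p), u <+: v → σ u <+: σ v := Iff.rfl

lemma autT_apply_append (p : ℕ) (f : Equiv.Perm (List (ZMod p))) (hf : f ∈ AutT p)
    (u v : List (ZMod p)) : f (u ++ v) = f u ++ (f (u ++ v)).drop u.length := by
  rw [mem_AutT_iff] at hf
  have hpre : f u <+: f (u ++ v) := hf.2 u (u ++ v) ⟨v, rfl⟩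
  have := List.prefix_iff_eq_append.mp hpre
  rw [hf.1 u] at this
  exact this.symm

/-- The section (state) of a tree automorphism at the vertex `u`, as a permutation of
the subtree rooted at `u` (identified with the whole tree). -/
def secEquiv (p : ℕ) (f : ↥(AutT p)) (u : List (ZMod p)) : Equiv.Perm (List (ZMod p)) where
  toFun v := ((f : Equiv.Perm (List (ZMod p))) (u ++ v)).drop u.length
  invFun v := (((f⁻¹ : ↥(AutT p)) : Equiv.Perm (List (ZMod p)))
      (((f : Equiv.Perm (List (ZMod p))) u) ++ v)).drop u.length
  left_inv v := by
    dsimp only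
    have key := autT_apply_append p (f : Equiv.Perm (List (ZMod p))) f.2 u v
    rw [← key]
    have h1 : ((f⁻¹ : ↥(AutT p)) : Equiv.Perm (List (ZMod p)))
        ((f : Equiv.Perm (List (ZMod p))) (u ++ v)) = u ++ v := by
      rw [InvMemClass.coe_inv]
      exact Equiv.symm_apply_apply _ _
    rw [h1, List.drop_left]
  right_inv v := by
    dsimp only
    have hg := (f⁻¹ : ↥(AutT p)).2
    rw [mem_AutT_iff] at hg
    have h1 : ((f⁻¹ : ↥(AutT p)) : Equiv.Perm (List (ZMod p)))
        ((f : Equiv.Perm (List (ZMod p))) u) = u := by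
      rw [InvMemClass.coe_inv]
      exact Equiv.symm_apply_apply _ _
    have hpre : u <+: ((f⁻¹ : ↥(AutT p)) : Equiv.Perm (List (ZMod p)))
        (((f : Equiv.Perm (List (ZMod p))) u) ++ v) := by
      have := hg.2 ((f : Equiv.Perm (List (ZMod p))) u)
        (((f : Equiv.Perm (List (ZMod p))) u) ++ v) ⟨v, rfl⟩
      rwa [h1] at this
    have hw := List.prefix_iff_eq_append.mp hpre
    rw [hw]
    have h2 : (f : Equiv.Perm (List (ZMod p)))
        (((f⁻¹ : ↥(AutT p)) : Equiv.Perm (List (ZMod p)))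
          (((f : Equiv.Perm (List (ZMod p))) u) ++ v))
        = ((f : Equiv.Perm (List (ZMod p))) u) ++ v := by
      rw [InvMemClass.coe_inv]
      exact Equiv.apply_symm_apply _ _
    rw [h2]
    have hlu : ((f : Equiv.Perm (List (ZMod p))) u).length = u.length :=
      ((mem_AutT_iff).mp f.2).1 u
    rw [← hlu, List.drop_left]

lemma secEquiv_mem (p : ℕ) (f : ↥(AutT p)) (u : List (ZMod p)) :
    secEquiv p f u ∈ AutT p := by
  rw [mem_AutT_iff]
  obtain ⟨h1, h2⟩ := (mem_AutT_iff).mp f.2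
  constructor
  · intro v
    show (((f : Equiv.Perm (List (ZMod p))) (u ++ v)).drop u.length).length = v.length
    rw [List.length_drop, h1, List.length_append]
    omega
  · intro v w hvw
    show ((f : Equiv.Perm (List (ZMod p))) (u ++ v)).drop u.length <+:
      ((f : Equiv.Perm (List (ZMod p))) (u ++ w)).drop u.length
    have hp : (f : Equiv.Perm (List (ZMod p))) (u ++ v) <+:
        (f : Equiv.Perm (List (ZMod p))) (u ++ w) := by
      apply h2
      obtain ⟨t, rfl⟩ := hvw
      exact ⟨t, by rw [List.append_assoc]⟩
    obtain ⟨t, ht⟩ := hp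
    have hle : u.length ≤ ((f : Equiv.Perm (List (ZMod p))) (u ++ v)).length := by
      rw [h1, List.length_append]; omega
    exact ⟨t, by rw [← List.drop_append_of_le_length hle, ht]⟩

/-- `sectionAt p f u = φ_u(f)`, the section of `f` at vertex `u`, as a tree automorphism. -/
def sectionAt (p : ℕ) (f : ↥(AutT p)) (u : List (ZMod p)) : ↥(AutT p) :=
  ⟨secEquiv p f u, secEquiv_mem p f u⟩

/-- Add `k` to the first letter of a word (identity on the empty word). -/
def addFirst (p : ℕ) (k : ZMod p) : List (ZMod p) → List (ZMod p)
  | [] => []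
  | x :: v => (x + k) :: v

lemma addFirst_addFirst (p : ℕ) (k l : ZMod p) (v : List (ZMod p)) :
    addFirst p k (addFirst p l v) = addFirst p (l + k) v := by
  cases v with
  | nil => rfl
  | cons x w => show (x + l + k) :: w = (x + (l + k)) :: w; rw [add_assoc]

lemma addFirst_zero (p : ℕ) (v : List (ZMod p)) : addFirst p 0 v = v := by
  cases v with
  | nil => rfl
  | cons x w => show (x + 0) :: w = x :: w; rw [add_zero]

lemma addFirst_length (p : ℕ) (k : ZMod p) (v : List (ZMod p)) :
    (addFirst p k v).length = v.length := by
  cases v <;> rfl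

/-- The rooted automorphism corresponding to the `p`-cycle `(1 2 ⋯ p)`:
it adds `1` to the first letter of every nonempty word. -/
def aPerm (p : ℕ) : Equiv.Perm (List (ZMod p)) where
  toFun := addFirst p 1
  invFun := addFirst p (-1)
  left_inv v := by rw [addFirst_addFirst, add_neg_cancel, addFirst_zero]
  right_inv v := by rw [addFirst_addFirst, neg_add_cancel, addFirst_zero]

lemma addFirst_prefix (p : ℕ) (k : ZMod p) (u t : List (ZMod p)) :
    addFirst p k u <+: addFirst p k (u ++ t) := by
  cases u with
  | nil => exact List.nil_prefix
  | cons x w => exact ⟨t, rfl⟩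

lemma aPerm_mem (p : ℕ) : aPerm p ∈ AutT p := by
  rw [mem_AutT_iff]
  refine ⟨fun v => addFirst_length p 1 v, ?_⟩
  rintro u v ⟨t, rfl⟩
  exact addFirst_prefix p 1 u t

/-- The rooted generator `a` of a GGS-group. -/
def aA (p : ℕ) : ↥(AutT p) := ⟨aPerm p, aPerm_mem p⟩

/-- The underlying function of the directed automorphism `b` with defining vector `e`. -/
def bFun (p : ℕ) [NeZero p] (e : Fin (p - 1) → ZMod p) : List (ZMod p) → List (ZMod p)
  | [] => []
  | x :: v =>
    if h : x.val = 0 then x :: bFun p e v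
    else x :: addFirst p (e ⟨x.val - 1, by have := ZMod.val_lt x; omega⟩) v

lemma bFun_cons (p : ℕ) [NeZero p] (e : Fin (p - 1) → ZMod p) (x : ZMod p)
    (v : List (ZMod p)) :
    bFun p e (x :: v) = if h : x.val = 0 then x :: bFun p e v
      else x :: addFirst p (e ⟨x.val - 1, by have := ZMod.val_lt x; omega⟩) v := rfl

lemma bFun_bFun (p : ℕ) [NeZero p] (e f : Fin (p - 1) → ZMod p)
    (h : ∀ j, e j + f j = 0) (v : List (ZMod p)) : bFun p f (bFun p e v) = v := by
  induction v with
  | nil => rfl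
  | cons x w ih =>
    by_cases hx : x.val = 0
    · rw [bFun_cons, dif_pos hx, bFun_cons, dif_pos hx, ih]
    · rw [bFun_cons, dif_neg hx, bFun_cons, dif_neg hx, addFirst_addFirst, h, addFirst_zero]

/-- The directed automorphism `b` with defining vector `e`, as a permutation:
`ψ(b) = (a^{e_1}, …, a^{e_{p-1}}, b)`. -/
def bPerm (p : ℕ) [NeZero p] (e : Fin (p - 1) → ZMod p) : Equiv.Perm (List (ZMod p)) where
  toFun := bFun p e
  invFun := bFun p (fun j => -e j)
  left_inv v := bFun_bFun p e _ (fun j => add_neg_cancel _) v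
  right_inv v := bFun_bFun p _ e (fun j => neg_add_cancel _) v

lemma bFun_length (p : ℕ) [NeZero p] (e : Fin (p - 1) → ZMod p) (v : List (ZMod p)) :
    (bFun p e v).length = v.length := by
  induction v with
  | nil => rfl
  | cons x w ih =>
    by_cases hx : x.val = 0
    · rw [bFun_cons, dif_pos hx]; simpa using ih
    · rw [bFun_cons, dif_neg hx]; simp [addFirst_length]

lemma bPerm_mem (p : ℕ) [NeZero p] (e : Fin (p - 1) → ZMod p) : bPerm p e ∈ AutT p := by
  rw [mem_AutT_iff]
  refine ⟨fun v => bFun_length p e v, ?_⟩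
  rintro u v ⟨t, rfl⟩
  show bFun p e u <+: bFun p e (u ++ t)
  induction u with
  | nil => exact List.nil_prefix
  | cons x w ih =>
    by_cases hx : x.val = 0
    · rw [List.cons_append, bFun_cons, dif_pos hx, bFun_cons, dif_pos hx]
      exact List.cons_prefix_cons.mpr ⟨rfl, ih⟩
    · rw [List.cons_append, bFun_cons, dif_neg hx, bFun_cons, dif_neg hx]
      exact List.cons_prefix_cons.mpr ⟨rfl, addFirst_prefix p _ w t⟩

/-- The directed generator `b` of the GGS-group with defining vector `e`. -/
def bA (p : ℕ) [NeZero p] (e : Fin (p - 1) → ZMod p) : ↥(AutT p) :=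
  ⟨bPerm p e, bPerm_mem p e⟩

/-- The GGS-group `G = ⟨a, b⟩ ≤ Aut T` with defining vector `e`. -/
def GGS (p : ℕ) [NeZero p] (e : Fin (p - 1) → ZMod p) : Subgroup ↥(AutT p) :=
  Subgroup.closure {aA p, bA p e}

lemma aA_mem_GGS (p : ℕ) [NeZero p] (e : Fin (p - 1) → ZMod p) : aA p ∈ GGS p e :=
  Subgroup.subset_closure (Set.mem_insert _ _)

lemma bA_mem_GGS (p : ℕ) [NeZero p] (e : Fin (p - 1) → ZMod p) : bA p e ∈ GGS p e :=
  Subgroup.subset_closure (Set.mem_insert_of_mem _ rfl)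

/-- `a^n` for an exponent `n ∈ F_p`. -/
def aZ (p : ℕ) (n : ZMod p) : ↥(AutT p) := aA p ^ n.val

/-- `b^m` for an exponent `m ∈ F_p`. -/
def bZ (p : ℕ) [NeZero p] (e : Fin (p - 1) → ZMod p) (m : ZMod p) : ↥(AutT p) :=
  bA p e ^ m.val

/-- The length `|g|` of an element of the GGS-group with defining vector `e`:
the minimal number `m` of `b`-syllables in an expression
`g = a^{α_1} b^{β_1} a^{α_2} ⋯ b^{β_m} a^{α_{m+1}}`. -/
noncomputable def glen (p : ℕ) [NeZero p] (e : Fin (p - 1) → ZMod p) (g : ↥(AutT p)) : ℕ :=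
  sInf {m : ℕ | ∃ (α : Fin (m + 1) → ZMod p) (β : Fin m → ZMod p),
    g = aZ p (α 0) * (List.ofFn fun i : Fin m => bZ p e (β i) * aZ p (α i.succ)).prod}

/-- An element of `Aut T` fixes all first-level vertices, i.e. lies in `st(1)`. -/
def FixesLevelOne (p : ℕ) (f : ↥(AutT p)) : Prop :=
  ∀ x : ZMod p, (f : Equiv.Perm (List (ZMod p))) [x] = [x]

/-- The constant defining vector `(1, …, 1)`, giving the GGS-group `𝒢`. -/
def constVec (p : ℕ) : Fin (p - 1) → ZMod p := fun _ => 1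

/-- `K`: the normal closure in `𝒢` of the conjugates `(b a⁻¹)^{a^i}`, `0 ≤ i ≤ p-1`. -/
def Kgrp (p : ℕ) [NeZero p] : Subgroup ↥(AutT p) :=
  Subgroup.closure {x : ↥(AutT p) | ∃ i : ℕ, i ≤ p - 1 ∧ ∃ g ∈ GGS p (constVec p),
    x = g⁻¹ * ((aA p ^ i)⁻¹ * (bA p (constVec p) * (aA p)⁻¹) * aA p ^ i) * g}

/-!
Every element of `𝒢` acts on the first level by a translation, and `𝒢 / K` is cyclic since
`b ≡ a` modulo `K`. Hence `K' ≤ 𝒢'` fixes the first level, and the sections of a commutator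
`⁅k, l⁆` of elements of `K` are, modulo `K`, commutators of sections of elements of `𝒢`, so they
lie in `K`.

The other inclusions come from subgroups of `K` cut out by `ψ`: the projections of `ψ(K')`, and
the projections at `x` of the elements of `ψ(K ∩ st(1))` that are trivial at `x - 1`. Since `𝒢`
is fractal and normalises `K` and `K'`, these subgroups are normalised by `𝒢`. They contain
`c = b a⁻¹`, as witnessed by `ψ ⁅c, c^a⁆` and by `ψ (c (c^a)⁻¹) = (c, 1, …, 1, c⁻¹)` up to a cyclic
shift (here `p` odd is used), so they contain `K`. Taking commutators with `(c, 1, …, 1, c⁻¹)`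
then gives `K' × 1 × ⋯ × 1 ≤ ψ(K')`, and one more commutator with the subdirectness of `ψ(K')`
gives `γ₃(K) × 1 × ⋯ × 1 ≤ ψ(K'')`.
-/

open Subgroup
open scoped commutatorElement

section Sections

variable {p : ℕ}

lemma autT_apply_nil (f : ↥(AutT p)) : (f : Equiv.Perm (List (ZMod p))) [] = [] :=
  List.length_eq_zero_iff.mp ((mem_AutT_iff.mp f.2).1 [])

def rootPerm (f : ↥(AutT p)) (x : ZMod p) : ZMod p :=
  ((f : Equiv.Perm (List (ZMod p))) [x]).headI

def sec (f : ↥(AutT p)) (x : ZMod p) : ↥(AutT p) := sectionAt p f [x]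

lemma apply_cons_rootPerm (f : ↥(AutT p)) (x : ZMod p) (v : List (ZMod p)) :
    (f : Equiv.Perm (List (ZMod p))) (x :: v)
      = rootPerm f x :: (sec f x : Equiv.Perm (List (ZMod p))) v := by
  have hlen : ((f : Equiv.Perm (List (ZMod p))) [x]).length = 1 := (mem_AutT_iff.mp f.2).1 [x]
  obtain ⟨y, hy⟩ := List.length_eq_one_iff.mp hlen
  have h := autT_apply_append p f f.2 [x] v
  rw [List.singleton_append] at h
  rw [h, hy, rootPerm, hy, List.headI_cons, List.singleton_append]
  rfl

lemma rootPerm_mul (f g : ↥(AutT p)) (x : ZMod p) :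
    rootPerm (f * g) x = rootPerm f (rootPerm g x) := by
  rw [rootPerm, Subgroup.coe_mul, Equiv.Perm.mul_apply, apply_cons_rootPerm g x [],
    autT_apply_nil, apply_cons_rootPerm f _ [], List.headI_cons]

lemma rootPerm_one (x : ZMod p) : rootPerm (1 : ↥(AutT p)) x = x := rfl

def rootAction : ↥(AutT p) →* Equiv.Perm (ZMod p) where
  toFun f :=
    { toFun := rootPerm f
      invFun := rootPerm f⁻¹
      left_inv x := by rw [← rootPerm_mul, inv_mul_cancel, rootPerm_one]
      right_inv x := by rw [← rootPerm_mul, mul_inv_cancel, rootPerm_one] }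
  map_one' := Equiv.ext rootPerm_one
  map_mul' f g := Equiv.ext (rootPerm_mul f g)

lemma apply_cons (f : ↥(AutT p)) (x : ZMod p) (v : List (ZMod p)) :
    (f : Equiv.Perm (List (ZMod p))) (x :: v)
      = rootAction f x :: (sec f x : Equiv.Perm (List (ZMod p))) v :=
  apply_cons_rootPerm f x v

lemma rootAction_eq_and_sec_eq_of_apply_cons {f : ↥(AutT p)} {σ : ZMod p → ZMod p}
    {s : ZMod p → ↥(AutT p)}
    (h : ∀ x v, (f : Equiv.Perm (List (ZMod p))) (x :: v)
      = σ x :: (s x : Equiv.Perm (List (ZMod p))) v) (x : ZMod p) :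
    rootAction f x = σ x ∧ sec f x = s x := by
  have hx : ∀ v, rootAction f x = σ x ∧ (sec f x : Equiv.Perm (List (ZMod p))) v
      = (s x : Equiv.Perm (List (ZMod p))) v := fun v => by
    simpa only [apply_cons, List.cons.injEq] using h x v
  exact ⟨(hx []).1, Subtype.ext (Equiv.ext fun v => (hx v).2)⟩

lemma sec_mul (f g : ↥(AutT p)) (x : ZMod p) :
    sec (f * g) x = sec f (rootAction g x) * sec g x := by
  refine (rootAction_eq_and_sec_eq_of_apply_cons (f := f * g)
    (σ := fun x => rootAction f (rootAction g x))
    (s := fun x => sec f (rootAction g x) * sec g x) (fun x v => ?_) x).2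
  rw [Subgroup.coe_mul, Equiv.Perm.mul_apply, apply_cons, apply_cons, Subgroup.coe_mul,
    Equiv.Perm.mul_apply, ← Equiv.Perm.mul_apply, ← map_mul]

lemma sec_one (x : ZMod p) : sec (1 : ↥(AutT p)) x = 1 :=
  (rootAction_eq_and_sec_eq_of_apply_cons (f := 1) (σ := id) (s := 1) (fun _ _ => rfl) x).2

lemma sec_inv (f : ↥(AutT p)) (x : ZMod p) :
    sec f⁻¹ x = (sec f ((rootAction f)⁻¹ x))⁻¹ := by
  refine eq_inv_of_mul_eq_one_right ?_
  rw [← map_inv, ← sec_mul, mul_inv_cancel, sec_one]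

lemma sec_mul_inv_rootAction (f g : ↥(AutT p)) (y : ZMod p) :
    sec (f * g⁻¹) (rootAction g y) = sec f y * (sec g y)⁻¹ := by
  rw [sec_mul, sec_inv, map_inv, Equiv.Perm.inv_eq_iff_eq.mpr rfl]

lemma sec_commutatorElement (k l : ↥(AutT p)) (x : ZMod p) :
    sec ⁅k, l⁆ (rootAction (l * k) x)
      = sec k (rootAction l x) * sec l x * (sec k x)⁻¹ * (sec l (rootAction k x))⁻¹ := by
  have h := sec_mul ⁅k, l⁆ (l * k) x
  rw [commutatorElement_def, show k * l * k⁻¹ * l⁻¹ * (l * k) = k * l by group,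
    ← commutatorElement_def] at h
  rw [eq_mul_inv_iff_mul_eq, eq_mul_inv_iff_mul_eq, mul_assoc, ← sec_mul, ← h, sec_mul]

lemma fixesLevelOne_iff_mem_ker {f : ↥(AutT p)} :
    FixesLevelOne p f ↔ f ∈ (rootAction (p := p)).ker := by
  simp only [FixesLevelOne, MonoidHom.mem_ker, Equiv.ext_iff, Equiv.Perm.one_apply,
    apply_cons f _ [], autT_apply_nil, List.cons.injEq, and_true]

end Sections

section GroupLemmas

variable {G : Type*} [Group G]

lemma le_normalizer_commutator {L H₁ H₂ : Subgroup G} (h₁ : L ≤ normalizer H₁)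
    (h₂ : L ≤ normalizer H₂) : L ≤ normalizer (⁅H₁, H₂⁆ : Subgroup G) := by
  rw [Subgroup.commutator_def, le_normalizer_closure_iff]
  rintro g hg _ ⟨k₁, hk₁, k₂, hk₂, rfl⟩
  rw [conjugate_commutatorElement]
  exact subset_closure ⟨_, (le_normalizer_iff.mp h₁) g hg k₁ hk₁, _,
    (le_normalizer_iff.mp h₂) g hg k₂ hk₂, rfl⟩

lemma commutator_closure_le {S : Set G} {N : Subgroup G} (hN : closure S ≤ normalizer N)
    (hS : ∀ s ∈ S, ∀ t ∈ S, ⁅s, t⁆ ∈ N) : ⁅closure S, closure S⁆ ≤ N := by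
  have conj_mem : ∀ g ∈ closure S, ∀ n ∈ N, g * n * g⁻¹ ∈ N := le_normalizer_iff.mp hN
  have left : ∀ u ∈ closure S, ∀ t ∈ S, ⁅u, t⁆ ∈ N := by
    intro u hu t ht
    induction hu using Subgroup.closure_induction with
    | mem s hs => exact hS s hs t ht
    | one => simpa only [commutatorElement_one_left] using N.one_mem
    | mul u₁ u₂ hu₁ _ ih₁ ih₂ =>
      rw [commutatorElement_mul_left_eq_conj_mul]
      exact mul_mem (conj_mem u₁ hu₁ _ ih₂) ih₁
    | inv u hu ih =>
      rw [commutatorElement_inv_left, ← commutatorElement_inv]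
      simpa only [inv_inv] using conj_mem u⁻¹ (inv_mem hu) _ (inv_mem ih)
  rw [Subgroup.commutator_le]
  intro u hu w hw
  induction hw using Subgroup.closure_induction with
  | mem t ht => exact left u hu t ht
  | one => simpa only [commutatorElement_one_right] using N.one_mem
  | mul w₁ w₂ hw₁ _ ih₁ ih₂ =>
    rw [commutatorElement_mul_right_eq_mul_conj, mul_assoc, mul_assoc, ← mul_assoc w₁]
    exact mul_mem ih₁ (conj_mem w₁ hw₁ _ ih₂)
  | inv w hw ih =>
    rw [commutatorElement_inv_right, ← commutatorElement_inv]
    simpa only [inv_inv] using conj_mem w⁻¹ (inv_mem hw) _ (inv_mem ih)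

variable {ι : Type*} [DecidableEq ι] {H : ι → Type*} [∀ i, Group (H i)]

lemma Pi.conj_mulSingle (w : ∀ i, H i) (i : ι) (u : H i) :
    w * Pi.mulSingle i u * w⁻¹ = Pi.mulSingle i (w i * u * (w i)⁻¹) := by
  funext j
  by_cases hj : j = i
  · subst hj; simp
  · simp [Pi.mulSingle_eq_of_ne hj]

lemma Pi.commutatorElement_mulSingle (i : ι) (u : H i) (w : ∀ i, H i) :
    ⁅Pi.mulSingle i u, w⁆ = Pi.mulSingle i ⁅u, w i⁆ := by
  funext j
  by_cases hj : j = i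
  · subst hj; simp [commutatorElement_def]
  · simp [commutatorElement_def, Pi.mulSingle_eq_of_ne hj]

end GroupLemmas

section Psi

variable {p : ℕ}

lemma sec_mul_of_mem_ker (f : ↥(AutT p)) {g : ↥(AutT p)} (hg : g ∈ (rootAction (p := p)).ker)
    (x : ZMod p) : sec (f * g) x = sec f x * sec g x := by
  rw [sec_mul, (MonoidHom.mem_ker.mp hg), Equiv.Perm.one_apply]

/-- The paper's `ψ`; here `st(1)` is the kernel of `rootAction`. -/
def psi : (rootAction (p := p)).ker →* (ZMod p → ↥(AutT p)) where
  toFun g x := sec g x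
  map_one' := funext sec_one
  map_mul' f g := funext (sec_mul_of_mem_ker f g.2)

@[simp]
lemma psi_apply (g : (rootAction (p := p)).ker) (x : ZMod p) : psi g x = sec g x := rfl

/-- `ψ(H ∩ st(1))`. -/
def psiImage (H : Subgroup ↥(AutT p)) : Subgroup (ZMod p → ↥(AutT p)) :=
  (H.subgroupOf (rootAction (p := p)).ker).map psi

lemma mem_psiImage {H : Subgroup ↥(AutT p)} {w : ZMod p → ↥(AutT p)} :
    w ∈ psiImage H ↔ ∃ g ∈ H, ∃ hg : g ∈ (rootAction (p := p)).ker, psi ⟨g, hg⟩ = w := by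
  constructor
  · rintro ⟨⟨g, hg⟩, hgH, rfl⟩
    exact ⟨g, hgH, hg, rfl⟩
  · rintro ⟨g, hgH, hg, rfl⟩
    exact ⟨⟨g, hg⟩, hgH, rfl⟩

lemma psi_mem_psiImage {H : Subgroup ↥(AutT p)} {g : ↥(AutT p)} (hgH : g ∈ H)
    (hg : g ∈ (rootAction (p := p)).ker) : psi ⟨g, hg⟩ ∈ psiImage H :=
  mem_psiImage.mpr ⟨g, hgH, hg, rfl⟩

lemma psiImage_le_normalizer {L H : Subgroup ↥(AutT p)} (hLH : L ≤ normalizer H) :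
    psiImage L ≤ normalizer (psiImage H) := by
  rw [le_normalizer_iff]
  intro w hw v hv
  obtain ⟨m, hmL, hm, rfl⟩ := mem_psiImage.mp hw
  obtain ⟨g, hgH, hg, rfl⟩ := mem_psiImage.mp hv
  have hconj : m * g * m⁻¹ ∈ (rootAction (p := p)).ker :=
    mul_mem (mul_mem hm hg) (inv_mem hm)
  convert psi_mem_psiImage ((le_normalizer_iff.mp hLH) m hmL g hgH) hconj using 1
  rw [← map_mul, ← map_inv, ← map_mul]
  rfl

lemma commutator_psiImage_le (H L : Subgroup ↥(AutT p)) :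
    ⁅psiImage H, psiImage L⁆ ≤ psiImage ⁅H, L⁆ := by
  rw [commutator_le]
  intro w hw v hv
  obtain ⟨g, hgH, hg, rfl⟩ := mem_psiImage.mp hw
  obtain ⟨l, hlL, hl, rfl⟩ := mem_psiImage.mp hv
  rw [← map_commutatorElement]
  exact psi_mem_psiImage (commutator_mem_commutator hgH hlL) _

end Psi

section Generators

variable {p : ℕ}

lemma rootAction_aA_apply (x : ZMod p) : rootAction (aA p) x = x + 1 :=
  ((rootAction_eq_and_sec_eq_of_apply_cons (f := aA p) (s := 1) (fun _ _ => rfl)) x).1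

lemma sec_aA (x : ZMod p) : sec (aA p) x = 1 :=
  ((rootAction_eq_and_sec_eq_of_apply_cons (f := aA p) (s := 1) (fun _ _ => rfl)) x).2

lemma rootAction_aA_inv_apply (x : ZMod p) : (rootAction (aA p))⁻¹ x = x - 1 := by
  rw [Equiv.Perm.inv_eq_iff_eq, rootAction_aA_apply, sub_add_cancel]

lemma rootAction_aA_pow_apply (n : ℕ) (x : ZMod p) : rootAction (aA p ^ n) x = x + n := by
  induction n generalizing x with
  | zero => simp
  | succ n ih =>
    rw [pow_succ, map_mul, Equiv.Perm.mul_apply, rootAction_aA_apply, ih]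
    push_cast
    ring

lemma sec_aA_pow (n : ℕ) (x : ZMod p) : sec (aA p ^ n) x = 1 := by
  induction n generalizing x with
  | zero => exact sec_one x
  | succ n ih => rw [pow_succ, sec_mul, sec_aA, ih, one_mul]

lemma sec_aA_pow_inv_mul_mul (n : ℕ) (f : ↥(AutT p)) (x : ZMod p) :
    sec ((aA p ^ n)⁻¹ * f * aA p ^ n) x = sec f (x + n) := by
  rw [sec_mul, sec_mul, sec_inv, sec_aA_pow, sec_aA_pow, inv_one, one_mul, mul_one,
    rootAction_aA_pow_apply]

variable [NeZero p]

lemma bA_apply_cons (x : ZMod p) (v : List (ZMod p)) :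
    (bA p (constVec p) : Equiv.Perm (List (ZMod p))) (x :: v)
      = x :: ((if x = 0 then bA p (constVec p) else aA p : ↥(AutT p))
        : Equiv.Perm (List (ZMod p))) v := by
  change bFun p (constVec p) (x :: v) = _
  rw [bFun_cons]
  by_cases hx : x = 0
  · rw [dif_pos ((ZMod.val_eq_zero x).mpr hx), if_pos hx]
    rfl
  · rw [dif_neg (mt (ZMod.val_eq_zero x).mp hx), if_neg hx]
    rfl

lemma rootAction_bA : rootAction (bA p (constVec p)) = 1 :=
  Equiv.ext fun x => (rootAction_eq_and_sec_eq_of_apply_cons (σ := id) bA_apply_cons x).1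

lemma sec_bA (x : ZMod p) :
    sec (bA p (constVec p)) x = if x = 0 then bA p (constVec p) else aA p :=
  (rootAction_eq_and_sec_eq_of_apply_cons (σ := id) bA_apply_cons x).2

end Generators

def cGen (p : ℕ) [NeZero p] : ↥(AutT p) := bA p (constVec p) * (aA p)⁻¹

section GGSStructure

variable {p : ℕ} [NeZero p]

local notation "𝒢" => GGS p (constVec p)
local notation "𝒦" => Kgrp p

lemma Kgrp_eq_closure_conj_cGen : 𝒦 = closure {x | ∃ h ∈ 𝒢, x = h * cGen p * h⁻¹} := by
  refine le_antisymm ((closure_le _).mpr ?_) ((closure_le _).mpr ?_)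
  · rintro _ ⟨i, -, g, hg, rfl⟩
    refine subset_closure ⟨(aA p ^ i * g)⁻¹, inv_mem (mul_mem (pow_mem (aA_mem_GGS p _) i) hg), ?_⟩
    rw [cGen]; group
  · rintro _ ⟨h, hh, rfl⟩
    exact subset_closure ⟨0, Nat.zero_le _, h⁻¹, inv_mem hh, by rw [cGen]; group⟩

lemma conj_cGen_mem_Kgrp {h : ↥(AutT p)} (hh : h ∈ 𝒢) : h * cGen p * h⁻¹ ∈ 𝒦 := by
  rw [Kgrp_eq_closure_conj_cGen]
  exact subset_closure ⟨h, hh, rfl⟩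

lemma cGen_mem_Kgrp : cGen p ∈ 𝒦 := by
  simpa using conj_cGen_mem_Kgrp (one_mem 𝒢)

lemma Kgrp_le_GGS : 𝒦 ≤ 𝒢 := by
  rw [Kgrp_eq_closure_conj_cGen, closure_le]
  rintro _ ⟨h, hh, rfl⟩
  exact mul_mem (mul_mem hh (mul_mem (bA_mem_GGS p _) (inv_mem (aA_mem_GGS p _)))) (inv_mem hh)

lemma GGS_le_normalizer_Kgrp : 𝒢 ≤ normalizer 𝒦 := by
  rw [Kgrp_eq_closure_conj_cGen, le_normalizer_closure_iff]
  rintro g hg _ ⟨h, hh, rfl⟩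
  exact subset_closure ⟨g * h, mul_mem hg hh, by group⟩

lemma conj_mem_Kgrp {g k : ↥(AutT p)} (hg : g ∈ 𝒢) (hk : k ∈ 𝒦) : g * k * g⁻¹ ∈ 𝒦 :=
  le_normalizer_iff.mp GGS_le_normalizer_Kgrp g hg k hk

lemma Kgrp_le_of_cGen_mem {S : Subgroup ↥(AutT p)} (hc : cGen p ∈ S) (hS : 𝒢 ≤ normalizer S) :
    𝒦 ≤ S := by
  rw [Kgrp_eq_closure_conj_cGen, closure_le]
  rintro _ ⟨h, hh, rfl⟩
  exact le_normalizer_iff.mp hS h hh _ hc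

/-- `𝒢 / K` is generated by the image of `a`, since `b ≡ a` modulo `K`. -/
lemma commutator_GGS_le_Kgrp : ⁅𝒢, 𝒢⁆ ≤ 𝒦 := by
  have hab : ⁅aA p, bA p (constVec p)⁆ ∈ 𝒦 := by
    have h := mul_mem (conj_cGen_mem_Kgrp (aA_mem_GGS p _)) (inv_mem (cGen_mem_Kgrp (p := p)))
    convert h using 1
    rw [cGen, commutatorElement_def]
    group
  refine commutator_closure_le GGS_le_normalizer_Kgrp ?_
  rintro s (rfl | rfl) t (rfl | rfl)
  · simpa only [commutatorElement_self] using one_mem 𝒦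
  · exact hab
  · simpa only [commutatorElement_inv] using inv_mem hab
  · simpa only [commutatorElement_self] using one_mem 𝒦

lemma commutator_GGS_le_ker : ⁅𝒢, 𝒢⁆ ≤ (rootAction (p := p)).ker := by
  refine commutator_closure_le (le_normalizer_of_normal.trans' le_top) ?_
  rintro s (rfl | rfl) t (rfl | rfl) <;>
    simp only [MonoidHom.mem_ker, map_commutatorElement, rootAction_bA, commutatorElement_self,
      map_one, commutatorElement_one_left, commutatorElement_one_right]

lemma sec_mem_GGS {g : ↥(AutT p)} (hg : g ∈ 𝒢) (x : ZMod p) : sec g x ∈ 𝒢 := by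
  induction hg using closure_induction generalizing x with
  | mem s hs =>
    rcases hs with rfl | rfl
    · rw [sec_aA]; exact one_mem 𝒢
    · rw [sec_bA]; split_ifs
      exacts [bA_mem_GGS p _, aA_mem_GGS p _]
  | one => rw [sec_one]; exact one_mem 𝒢
  | mul f g _ _ ihf ihg => rw [sec_mul]; exact mul_mem (ihf _) (ihg x)
  | inv f _ ih => rw [sec_inv]; exact inv_mem (ih _)

lemma sec_inv_mul_sec_mem_Kgrp {g : ↥(AutT p)} (hg : g ∈ 𝒢) (x y : ZMod p) :
    (sec g x)⁻¹ * sec g y ∈ 𝒦 := by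
  have haib : (aA p)⁻¹ * bA p (constVec p) ∈ 𝒦 := by
    convert conj_cGen_mem_Kgrp (inv_mem (aA_mem_GGS p (constVec p))) using 1
    rw [cGen]; group
  induction hg using closure_induction generalizing x y with
  | mem s hs =>
    rcases hs with rfl | rfl
    · simpa only [sec_aA, inv_one, one_mul] using one_mem 𝒦
    · simp only [sec_bA]
      split_ifs
      · simpa only [inv_mul_cancel] using one_mem 𝒦
      · simpa only [mul_inv_rev, inv_inv] using inv_mem haib
      · exact haib
      · simpa only [inv_mul_cancel] using one_mem 𝒦
  | one => simpa only [sec_one, inv_one, one_mul] using one_mem 𝒦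
  | mul f g _ hg ihf ihg =>
    rw [sec_mul, sec_mul, show ∀ u v w z : ↥(AutT p), (u * v)⁻¹ * (w * z)
      = v⁻¹ * (u⁻¹ * w) * v⁻¹⁻¹ * (v⁻¹ * z) from fun _ _ _ _ => by group]
    exact mul_mem (conj_mem_Kgrp (inv_mem (sec_mem_GGS hg x)) (ihf _ _)) (ihg x y)
  | inv f hf ih =>
    rw [sec_inv, sec_inv, inv_inv, show ∀ u w : ↥(AutT p), u * w⁻¹ = u * (u⁻¹ * w)⁻¹ * u⁻¹
      from fun _ _ => by group]
    exact conj_mem_Kgrp (sec_mem_GGS hf _) (inv_mem (ih _ _))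

lemma sec_commutatorElement_mem_Kgrp {k l : ↥(AutT p)} (hk : k ∈ 𝒦) (hl : l ∈ 𝒦)
    (x : ZMod p) : sec ⁅k, l⁆ x ∈ 𝒦 := by
  obtain ⟨y, rfl⟩ := (rootAction (l * k)).surjective x
  have hkG := Kgrp_le_GGS hk
  have hlG := Kgrp_le_GGS hl
  set U := sec k (rootAction l y)
  set V := sec l y
  rw [sec_commutatorElement, show U * V * (sec k y)⁻¹ * (sec l (rootAction k y))⁻¹
      = ⁅U, V⁆ * ((V * U) * (U⁻¹ * sec k y)⁻¹ * (V * U)⁻¹)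
        * (V * (V⁻¹ * sec l (rootAction k y))⁻¹ * V⁻¹) by group]
  have hUG : U ∈ 𝒢 := sec_mem_GGS hkG _
  have hVG : V ∈ 𝒢 := sec_mem_GGS hlG _
  refine mul_mem (mul_mem (commutator_GGS_le_Kgrp (commutator_mem_commutator hUG hVG)) ?_) ?_
  · exact conj_mem_Kgrp (mul_mem hVG hUG) (inv_mem (sec_inv_mul_sec_mem_Kgrp hkG _ _))
  · exact conj_mem_Kgrp hVG (inv_mem (sec_inv_mul_sec_mem_Kgrp hlG _ _))

lemma commutator_Kgrp_le_ker : ⁅𝒦, 𝒦⁆ ≤ (rootAction (p := p)).ker :=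
  (commutator_mono Kgrp_le_GGS Kgrp_le_GGS).trans commutator_GGS_le_ker

lemma sec_mem_Kgrp_of_mem_commutator {g : ↥(AutT p)} (hg : g ∈ ⁅𝒦, 𝒦⁆) (x : ZMod p) :
    sec g x ∈ 𝒦 := by
  have hker := commutator_Kgrp_le_ker (p := p)
  rw [Subgroup.commutator_def] at hg hker
  induction hg using closure_induction generalizing x with
  | mem _ h =>
    obtain ⟨k, hk, l, hl, rfl⟩ := h
    exact sec_commutatorElement_mem_Kgrp hk hl x
  | one => rw [sec_one]; exact one_mem 𝒦
  | mul f g _ hg ihf ihg => rw [sec_mul_of_mem_ker f (hker hg)]; exact mul_mem (ihf x) (ihg x)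
  | inv f hf ih =>
    rw [sec_inv, MonoidHom.mem_ker.mp (hker hf), inv_one, Equiv.Perm.one_apply]
    exact inv_mem (ih x)

end GGSStructure

section Computations

variable {p : ℕ} [NeZero p]

lemma rootAction_cGen_apply (x : ZMod p) : rootAction (cGen p) x = x - 1 := by
  rw [cGen, map_mul, map_inv, rootAction_bA, one_mul, rootAction_aA_inv_apply]

lemma sec_cGen (x : ZMod p) :
    sec (cGen p) x = if x = 1 then bA p (constVec p) else aA p := by
  rw [cGen, sec_mul, sec_inv, sec_aA, inv_one, mul_one, map_inv, rootAction_aA_inv_apply,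
    sec_bA]
  simp only [sub_eq_zero]

def cGenConj (p : ℕ) [NeZero p] : ↥(AutT p) := (aA p)⁻¹ * cGen p * aA p

lemma rootAction_cGenConj_apply (x : ZMod p) : rootAction (cGenConj p) x = x - 1 := by
  rw [cGenConj, map_mul, map_mul, Equiv.Perm.mul_apply, Equiv.Perm.mul_apply, map_inv,
    rootAction_aA_apply, rootAction_cGen_apply, rootAction_aA_inv_apply]
  ring

lemma sec_cGenConj (x : ZMod p) : sec (cGenConj p) x = sec (cGen p) (x + 1) := by
  simpa only [cGenConj, pow_one, Nat.cast_one] using sec_aA_pow_inv_mul_mul 1 (cGen p) x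

lemma cGenConj_mem_Kgrp : cGenConj p ∈ Kgrp p := by
  simpa only [cGenConj, inv_inv] using conj_cGen_mem_Kgrp (inv_mem (aA_mem_GGS p (constVec p)))

end Computations

section Branching

variable {p : ℕ} [NeZero p]

local notation "𝒢" => GGS p (constVec p)
local notation "𝒦" => Kgrp p

/-- Conjugating by a power of `a` permutes the first-level sections cyclically. -/
lemma shift_mem_psiImage {H : Subgroup ↥(AutT p)} (hH : 𝒢 ≤ normalizer H)
    {w : ZMod p → ↥(AutT p)} (hw : w ∈ psiImage H) (n : ZMod p) :
    (fun y => w (y + n)) ∈ psiImage H := by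
  obtain ⟨g, hgH, hg, rfl⟩ := mem_psiImage.mp hw
  have ha : (aA p ^ n.val)⁻¹ ∈ 𝒢 := inv_mem (pow_mem (aA_mem_GGS p _) _)
  have hconjH : (aA p ^ n.val)⁻¹ * g * aA p ^ n.val ∈ H := by
    simpa only [inv_inv] using le_normalizer_iff.mp hH _ ha g hgH
  have hconj : (aA p ^ n.val)⁻¹ * g * aA p ^ n.val ∈ (rootAction (p := p)).ker := by
    simpa only [inv_inv] using (MonoidHom.normal_ker _).conj_mem g hg (aA p ^ n.val)⁻¹
  convert psi_mem_psiImage hconjH hconj using 1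
  funext y
  simp only [psi_apply, sec_aA_pow_inv_mul_mul, ZMod.natCast_zmod_val]

lemma GGS_le_normalizer_commutator_Kgrp : 𝒢 ≤ normalizer (⁅𝒦, 𝒦⁆ : Subgroup ↥(AutT p)) :=
  le_normalizer_commutator GGS_le_normalizer_Kgrp GGS_le_normalizer_Kgrp

variable [Fact (1 < p)]

/-- `𝒢` is fractal. -/
lemma GGS_le_map_psiImage (x : ZMod p) : 𝒢 ≤ (psiImage 𝒢).map (Pi.evalMonoidHom _ x) := by
  have hb := psi_mem_psiImage (bA_mem_GGS p (constVec p)) (MonoidHom.mem_ker.mpr rootAction_bA)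
  have key : ∀ z, sec (bA p (constVec p)) z ∈ (psiImage 𝒢).map (Pi.evalMonoidHom _ x) :=
    fun z => ⟨_, shift_mem_psiImage le_normalizer hb (z - x), by simp⟩
  refine (closure_le _).mpr ?_
  rintro _ (rfl | rfl)
  · simpa only [sec_bA, one_ne_zero, if_false, SetLike.mem_coe] using key 1
  · simpa only [sec_bA, if_true, SetLike.mem_coe] using key 0

lemma GGS_le_normalizer_map_eval {H : Subgroup ↥(AutT p)} (hH : 𝒢 ≤ normalizer H)
    (x : ZMod p) : 𝒢 ≤ normalizer ((psiImage H).map (Pi.evalMonoidHom _ x)) :=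
  (GGS_le_map_psiImage x).trans
    ((map_mono (psiImage_le_normalizer hH)).trans (le_normalizer_map _))

lemma GGS_le_normalizer_map_eval_inf_ker {H : Subgroup ↥(AutT p)} (hH : 𝒢 ≤ normalizer H)
    (x y : ZMod p) :
    𝒢 ≤ normalizer ((psiImage H ⊓ (Pi.evalMonoidHom _ y).ker).map (Pi.evalMonoidHom _ x)) :=
  (GGS_le_map_psiImage x).trans <| (map_mono <| le_inf (psiImage_le_normalizer hH)
    (le_normalizer_of_normal.trans' le_top) |>.trans inf_normalizer_le_normalizer_inf).trans
      (le_normalizer_map _)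

lemma GGS_le_normalizer_comap_mulSingle {H : Subgroup ↥(AutT p)} (hH : 𝒢 ≤ normalizer H)
    (x : ZMod p) : 𝒢 ≤ normalizer ((psiImage H).comap (MonoidHom.mulSingle _ x)) := by
  rw [le_normalizer_iff]
  intro h hh u hu
  obtain ⟨w, hw, rfl⟩ := GGS_le_map_psiImage x hh
  have := le_normalizer_iff.mp (psiImage_le_normalizer hH) w hw _ hu
  rwa [MonoidHom.mulSingle_apply, Pi.conj_mulSingle] at this

lemma mulSingle_cGen_mul_mulSingle_cGen_inv_mem (x : ZMod p) :
    Pi.mulSingle x (cGen p) * Pi.mulSingle (x - 1) (cGen p)⁻¹ ∈ psiImage 𝒦 := by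
  have hK : cGen p * (cGenConj p)⁻¹ ∈ 𝒦 := mul_mem cGen_mem_Kgrp (inv_mem cGenConj_mem_Kgrp)
  have hker : cGen p * (cGenConj p)⁻¹ ∈ (rootAction (p := p)).ker := by
    rw [MonoidHom.mem_ker, map_mul, map_inv, mul_inv_eq_one]
    exact Equiv.ext fun y => by rw [rootAction_cGen_apply, rootAction_cGenConj_apply]
  convert shift_mem_psiImage GGS_le_normalizer_Kgrp (psi_mem_psiImage hK hker) (-x) using 1
  funext y
  obtain ⟨z, rfl⟩ : ∃ z, y = z - 1 + x := ⟨y - x + 1, by ring⟩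
  have e1 : z - 1 + x = x ↔ z = 1 := ⟨fun h => by linear_combination h, fun h => by rw [h]; ring⟩
  have e0 : z - 1 + x = x - 1 ↔ z = 0 :=
    ⟨fun h => by linear_combination h, fun h => by rw [h]; ring⟩
  have e2 : z + 1 = 1 ↔ z = 0 := ⟨fun h => by linear_combination h, fun h => by rw [h]; ring⟩
  rw [psi_apply, show z - 1 + x + -x = rootAction (cGenConj p) z by
    rw [rootAction_cGenConj_apply]; ring, sec_mul_inv_rootAction, sec_cGenConj, sec_cGen, sec_cGen]
  simp only [Pi.mul_apply, Pi.mulSingle_apply, e1, e0, e2]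
  by_cases h1 : z = 1
  · simp [h1, cGen]
  · by_cases h0 : z = 0
    · simp [h0, cGen]
    · simp [h1, h0]

lemma cGen_mem_map_psiImage_commutator (hp : Odd p) (x : ZMod p) :
    cGen p ∈ (psiImage ⁅𝒦, 𝒦⁆).map (Pi.evalMonoidHom _ x) := by
  have hK' := commutator_mem_commutator (cGen_mem_Kgrp (p := p)) cGenConj_mem_Kgrp
  have hw := psi_mem_psiImage hK' (commutator_Kgrp_le_ker hK')
  refine ⟨_, shift_mem_psiImage GGS_le_normalizer_commutator_Kgrp hw (-x), ?_⟩
  have h31 : (3 : ZMod p) ≠ 1 := fun h =>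
    ZMod.ne_neg_self hp one_ne_zero (by linear_combination h)
  have h21 : (2 : ZMod p) ≠ 1 := fun h => one_ne_zero (by linear_combination h)
  have h := sec_commutatorElement (cGen p) (cGenConj p) 2
  simp only [map_mul, Equiv.Perm.mul_apply, rootAction_cGen_apply, rootAction_cGenConj_apply,
    sec_cGenConj, show (2 : ZMod p) - 1 = 1 by ring, show (1 : ZMod p) - 1 = 0 by ring,
    show (1 : ZMod p) + 1 = 2 by ring, show (2 : ZMod p) + 1 = 3 by ring, sec_cGen, h31, h21,
    if_true, if_false] at h
  change sec ⁅cGen p, cGenConj p⁆ (x + -x) = cGen p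
  rw [add_neg_cancel, h, cGen]
  group

lemma Kgrp_le_map_psiImage_commutator (hp : Odd p) (x : ZMod p) :
    𝒦 ≤ (psiImage ⁅𝒦, 𝒦⁆).map (Pi.evalMonoidHom _ x) :=
  Kgrp_le_of_cGen_mem (cGen_mem_map_psiImage_commutator hp x)
    (GGS_le_normalizer_map_eval GGS_le_normalizer_commutator_Kgrp x)

lemma Kgrp_le_map_psiImage_inf_ker (hp : Odd p) (x : ZMod p) :
    𝒦 ≤ (psiImage 𝒦 ⊓ (Pi.evalMonoidHom _ (x - 1)).ker).map (Pi.evalMonoidHom _ x) := by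
  refine Kgrp_le_of_cGen_mem ?_ (GGS_le_normalizer_map_eval_inf_ker GGS_le_normalizer_Kgrp _ _)
  have hne : x - 1 ≠ x + 1 := fun h =>
    ZMod.ne_neg_self hp one_ne_zero (by linear_combination -h)
  have hx : x ≠ x + 1 := fun h => one_ne_zero (by linear_combination -h)
  have hx' : x - 1 ≠ x := fun h => one_ne_zero (by linear_combination -h)
  refine ⟨_, mem_inf.mpr ⟨inv_mem (mulSingle_cGen_mul_mulSingle_cGen_inv_mem (x + 1)), ?_⟩, ?_⟩
  · simp [hne, hx']
  · simp [hx]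

lemma mulSingle_commutatorElement_cGen_mem (hp : Odd p) (x : ZMod p) {v : ↥(AutT p)}
    (hv : v ∈ 𝒦) : Pi.mulSingle x ⁅v, cGen p⁆ ∈ psiImage ⁅𝒦, 𝒦⁆ := by
  obtain ⟨w, ⟨hw, hw1⟩, rfl⟩ := Kgrp_le_map_psiImage_inf_ker hp x hv
  convert commutator_psiImage_le _ _ (commutator_mem_commutator hw
    (mulSingle_cGen_mul_mulSingle_cGen_inv_mem x)) using 1
  have hx' : x - 1 ≠ x := fun h => one_ne_zero (by linear_combination -h)
  funext y
  by_cases hy : y = x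
  · subst hy
    simp [hx'.symm, commutatorElement_def]
  · by_cases hy' : y = x - 1
    · have hw1' : w (x - 1) = 1 := hw1
      subst hy'
      simp [hx', hw1', commutatorElement_def]
    · simp [hy, hy', commutatorElement_def]

lemma commutator_Kgrp_le_comap_mulSingle (hp : Odd p) (x : ZMod p) :
    ⁅𝒦, 𝒦⁆ ≤ (psiImage ⁅𝒦, 𝒦⁆).comap (MonoidHom.mulSingle _ x) := by
  set N := (psiImage ⁅𝒦, 𝒦⁆).comap (MonoidHom.mulSingle _ x)
  have hN : 𝒢 ≤ normalizer N :=
    GGS_le_normalizer_comap_mulSingle GGS_le_normalizer_commutator_Kgrp x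
  have key : ∀ u ∈ 𝒦, ⁅cGen p, u⁆ ∈ N := fun u hu => by
    rw [← commutatorElement_inv, mem_comap, map_inv, MonoidHom.mulSingle_apply]
    exact inv_mem (mulSingle_commutatorElement_cGen_mem hp x hu)
  have h := commutator_closure_le (S := {x | ∃ h ∈ 𝒢, x = h * cGen p * h⁻¹}) (N := N) ?_ ?_
  · rwa [← Kgrp_eq_closure_conj_cGen] at h
  · rw [← Kgrp_eq_closure_conj_cGen]
    exact Kgrp_le_GGS.trans hN
  · rintro _ ⟨h, hh, rfl⟩ _ ⟨h', hh', rfl⟩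
    rw [show ⁅h * cGen p * h⁻¹, h' * cGen p * h'⁻¹⁆
      = h * ⁅cGen p, (h⁻¹ * h') * cGen p * (h⁻¹ * h')⁻¹⁆ * h⁻¹ by
        simp only [commutatorElement_def]; group]
    exact le_normalizer_iff.mp hN h hh _ (key _ (conj_cGen_mem_Kgrp (mul_mem (inv_mem hh) hh')))

lemma commutator_commutator_Kgrp_le_comap_mulSingle (hp : Odd p) (x : ZMod p) :
    ⁅⁅𝒦, 𝒦⁆, 𝒦⁆ ≤ (psiImage ⁅⁅𝒦, 𝒦⁆, ⁅𝒦, 𝒦⁆⁆).comap (MonoidHom.mulSingle _ x) := by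
  rw [commutator_le]
  intro v hv k hk
  obtain ⟨w, hw, rfl⟩ := Kgrp_le_map_psiImage_commutator hp x hk
  have h := commutator_psiImage_le _ _
    (commutator_mem_commutator (commutator_Kgrp_le_comap_mulSingle hp x hv) hw)
  rwa [MonoidHom.mulSingle_apply, Pi.commutatorElement_mulSingle] at h

lemma pi_commutator_commutator_Kgrp_le_psiImage (hp : Odd p) :
    pi Set.univ (fun _ => ⁅⁅𝒦, 𝒦⁆, 𝒦⁆) ≤ psiImage ⁅⁅𝒦, 𝒦⁆, ⁅𝒦, 𝒦⁆⁆ :=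
  pi_le_iff.mpr fun x => map_le_iff_le_comap.mpr
    (commutator_commutator_Kgrp_le_comap_mulSingle hp x)

end Branching

/-- **Lemma 3.2.** Let `𝒢` be the GGS-group with constant defining vector and `K` as
above. Then `K' ≤ st(1)`, `ψ(K')` is a subdirect product of `K × ⋯ × K`, and
`ψ(K'') ≥ γ₃(K) × ⋯ × γ₃(K)`. -/
theorem Kgrp_derived_subdirect
    (p : ℕ) [Fact p.Prime] (hodd : Odd p) :
    (∀ g ∈ ⁅Kgrp p, Kgrp p⁆, FixesLevelOne p g) ∧
    (∀ g ∈ ⁅Kgrp p, Kgrp p⁆, ∀ x : ZMod p, sectionAt p g [x] ∈ Kgrp p) ∧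
    (∀ x : ZMod p, ∀ k ∈ Kgrp p, ∃ g ∈ ⁅Kgrp p, Kgrp p⁆, sectionAt p g [x] = k) ∧
    (∀ t : ZMod p → ↥(AutT p), (∀ x : ZMod p, t x ∈ ⁅⁅Kgrp p, Kgrp p⁆, Kgrp p⁆) →
      ∃ g ∈ ⁅⁅Kgrp p, Kgrp p⁆, ⁅Kgrp p, Kgrp p⁆⁆, FixesLevelOne p g ∧
        ∀ x : ZMod p, sectionAt p g [x] = t x) := by
  refine ⟨fun g hg => fixesLevelOne_iff_mem_ker.mpr (commutator_Kgrp_le_ker hg),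
    fun g hg x => sec_mem_Kgrp_of_mem_commutator hg x, fun x k hk => ?_, fun t ht => ?_⟩
  · obtain ⟨w, hw, rfl⟩ := Kgrp_le_map_psiImage_commutator hodd x hk
    obtain ⟨g, hgK', hg, rfl⟩ := mem_psiImage.mp hw
    exact ⟨g, hgK', rfl⟩
  · have hψt := pi_commutator_commutator_Kgrp_le_psiImage hodd
      ((Subgroup.mem_pi _).mpr fun x _ => ht x)
    obtain ⟨g, hgK'', hg, rfl⟩ := mem_psiImage.mp hψt
    exact ⟨g, hgK'', fixesLevelOne_iff_mem_ker.mpr hg, fun x => rfl⟩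
end

section
/- Let p be an odd prime and let G be a GGS-group with defining vector e satisfying λ = e_1 + ... + e_{p-1} ≠ 0. Let g ∈ G satisfy g ≡_{G'} b^t for some t ≠ 0 (so g ∈ st_G(1)), and for each u ∈ X write φ_u(g) ≡_{G'} a^{n_u} b^{m_u} with n_u, m_u ∈ F_p. Then exactly one of the following holds: (1) there exist u ∈ X and j₀ ≠ 0 such that φ_u(g) ≡_{G'} b^{j₀}; (2) for every u ∈ X with m_u ≠ 0 one has n_u ≠ 0, there exist two distinct u₁, u₂ ∈ X with n_{u₁} ≠ λ m_{u₁} and n_{u₂} ≠ λ m_{u₂}, and there exist two distinct v₁, v₂ ∈ X with m_{v₁} ≠ 0 and m_{v₂} ≠ 0. -/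
open List

namespace GGSAux

variable {p : ℕ}

/-- application of a tree automorphism to a word -/
def ap (f : ↥(AutT p)) (v : List (ZMod p)) : List (ZMod p) :=
  (f : Equiv.Perm (List (ZMod p))) v

lemma ap_mul (f g : ↥(AutT p)) (v : List (ZMod p)) : ap (f * g) v = ap f (ap g v) := rfl

lemma ap_one (v : List (ZMod p)) : ap (1 : ↥(AutT p)) v = v := rfl

lemma ap_inv_ap (f : ↥(AutT p)) (v : List (ZMod p)) : ap f⁻¹ (ap f v) = v := by
  simp [ap]

lemma ap_injective (f : ↥(AutT p)) : Function.Injective (ap f) :=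
  fun _ _ h => (f : Equiv.Perm (List (ZMod p))).injective h

lemma sec_apply (f : ↥(AutT p)) (u v : List (ZMod p)) :
    ap (sectionAt p f u) v = (ap f (u ++ v)).drop u.length := rfl

lemma sectionAt_mul (f g : ↥(AutT p)) (w : List (ZMod p)) :
    sectionAt p (f * g) w = sectionAt p f (ap g w) * sectionAt p g w := by
  apply Subtype.ext
  apply Equiv.ext
  intro v
  show ap (sectionAt p (f*g) w) v = ap (sectionAt p f (ap g w) * sectionAt p g w) v
  rw [ap_mul, sec_apply, sec_apply, sec_apply, ap_mul]
  have key := autT_apply_append p (g : Equiv.Perm (List (ZMod p))) g.2 w v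
  have hlen : (ap g w).length = w.length := g.2.1 w
  simp only [ap] at key hlen ⊢
  rw [← key, hlen]

lemma sectionAt_one (w : List (ZMod p)) : sectionAt p (1 : ↥(AutT p)) w = 1 := by
  apply Subtype.ext
  apply Equiv.ext
  intro v
  show ap (sectionAt p 1 w) v = ap 1 v
  rw [sec_apply, ap_one, ap_one, List.drop_left]

lemma sectionAt_inv (f : ↥(AutT p)) (w : List (ZMod p)) :
    sectionAt p f⁻¹ (ap f w) = (sectionAt p f w)⁻¹ := by
  have h := sectionAt_mul f⁻¹ f w
  rw [inv_mul_cancel, sectionAt_one] at h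
  exact (eq_inv_of_mul_eq_one_left h.symm)

/-! ### rotation structure -/

/-- the root rotation amount -/
def rF (f : ↥(AutT p)) : ZMod p := (ap f [0]).headI

def Rot0 (f : ↥(AutT p)) : Prop := ∀ x : ZMod p, ap f [x] = [x + rF f]

def sF (f : ↥(AutT p)) (u : ZMod p) : ZMod p := rF (sectionAt p f [u])

def Rot1 (f : ↥(AutT p)) : Prop := ∀ u : ZMod p, Rot0 (sectionAt p f [u])

def Rot2 (f : ↥(AutT p)) : Prop := ∀ u : ZMod p, Rot1 (sectionAt p f [u])

def Nice (f : ↥(AutT p)) : Prop := Rot0 f ∧ Rot1 f ∧ Rot2 f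

section fin
variable [NeZero p]

def BF (f : ↥(AutT p)) : ZMod p := ∑ u : ZMod p, sF f u

def S2F (f : ↥(AutT p)) (u : ZMod p) : ZMod p := BF (sectionAt p f [u])

def B2F (f : ↥(AutT p)) : ZMod p := ∑ u : ZMod p, S2F f u

end fin

lemma rF_one : rF (1 : ↥(AutT p)) = 0 := rfl

lemma Rot0_one : Rot0 (1 : ↥(AutT p)) := by
  intro x; rw [ap_one, rF_one, add_zero]

lemma sF_one (u : ZMod p) : sF (1 : ↥(AutT p)) u = 0 := by
  rw [sF, sectionAt_one, rF_one]

lemma Rot1_one : Rot1 (1 : ↥(AutT p)) := by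
  intro u; rw [sectionAt_one]; exact Rot0_one

lemma Rot2_one : Rot2 (1 : ↥(AutT p)) := by
  intro u; rw [sectionAt_one]; exact Rot1_one

lemma Nice_one : Nice (1 : ↥(AutT p)) := ⟨Rot0_one, Rot1_one, Rot2_one⟩

lemma BF_one [NeZero p] : BF (1 : ↥(AutT p)) = 0 := by
  simp [BF, sF_one]

lemma S2F_one [NeZero p] (u : ZMod p) : S2F (1 : ↥(AutT p)) u = 0 := by
  rw [S2F, sectionAt_one, BF_one]

lemma B2F_one [NeZero p] : B2F (1 : ↥(AutT p)) = 0 := by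
  simp [B2F, S2F_one]

/-! ### multiplicativity -/

variable {f g : ↥(AutT p)}

lemma rF_mul (hf : Rot0 f) (hg : Rot0 g) : rF (f * g) = rF f + rF g := by
  have : ap (f * g) [0] = [0 + rF g + rF f] := by
    rw [ap_mul, hg 0, hf (0 + rF g)]
  rw [rF, this]
  show 0 + rF g + rF f = rF f + rF g
  ring

lemma Rot0_mul (hf : Rot0 f) (hg : Rot0 g) : Rot0 (f * g) := by
  intro x
  rw [ap_mul, hg x, hf (x + rF g), rF_mul hf hg]
  show [x + rF g + rF f] = _
  ring_nf

lemma ap_rot0 (hf : Rot0 f) (u : ZMod p) : ap f [u] = [u + rF f] := hf u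

lemma sec_mul_vertex (f g : ↥(AutT p)) (hg : Rot0 g) (u : ZMod p) :
    sectionAt p (f * g) [u] = sectionAt p f [u + rF g] * sectionAt p g [u] := by
  rw [sectionAt_mul f g [u], hg u]

lemma sF_mul (hf : Rot1 f) (hg0 : Rot0 g) (hg : Rot1 g) (u : ZMod p) :
    sF (f * g) u = sF f (u + rF g) + sF g u := by
  rw [sF, sec_mul_vertex f g hg0 u, rF_mul (hf _) (hg _)]
  rfl

lemma Rot1_mul (hf : Rot1 f) (hg0 : Rot0 g) (hg : Rot1 g) : Rot1 (f * g) := by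
  intro u
  rw [sec_mul_vertex f g hg0 u]
  exact Rot0_mul (hf _) (hg _)

lemma Rot2_mul (hf : Rot2 f) (hf1 : Rot1 f) (hg0 : Rot0 g) (hg1 : Rot1 g) (hg : Rot2 g) :
    Rot2 (f * g) := by
  intro u
  rw [sec_mul_vertex f g hg0 u]
  exact Rot1_mul (hf _) (hg1 _) (hg _)

lemma Nice_mul (hf : Nice f) (hg : Nice g) : Nice (f * g) :=
  ⟨Rot0_mul hf.1 hg.1, Rot1_mul hf.2.1 hg.1 hg.2.1,
    Rot2_mul hf.2.2 hf.2.1 hg.1 hg.2.1 hg.2.2⟩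

section fin2
variable [NeZero p]

lemma BF_mul (hf : Rot1 f) (hg0 : Rot0 g) (hg : Rot1 g) : BF (f * g) = BF f + BF g := by
  rw [BF, BF, BF]
  rw [Finset.sum_congr rfl (fun u _ => sF_mul hf hg0 hg u), Finset.sum_add_distrib]
  congr 1
  exact Fintype.sum_equiv (Equiv.addRight (rF g)) _ _ (fun u => rfl)

lemma S2F_mul (hf2 : Rot2 f) (hf1 : Rot1 f) (hg0 : Rot0 g) (hg1 : Rot1 g) (hg2 : Rot2 g)
    (u : ZMod p) : S2F (f * g) u = S2F f (u + rF g) + S2F g u := by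
  rw [S2F, sec_mul_vertex f g hg0 u, BF_mul (hf2 _) (hg1 _) (hg2 _)]
  rfl

lemma B2F_mul (hf : Nice f) (hg : Nice g) : B2F (f * g) = B2F f + B2F g := by
  rw [B2F, B2F, B2F]
  rw [Finset.sum_congr rfl (fun u _ => S2F_mul hf.2.2 hf.2.1 hg.1 hg.2.1 hg.2.2 u),
    Finset.sum_add_distrib]
  congr 1
  exact Fintype.sum_equiv (Equiv.addRight (rF g)) _ _ (fun u => rfl)

end fin2

/-! ### inverses -/

lemma ap_inv_rot0 (hf : Rot0 f) (x : ZMod p) : ap f⁻¹ [x] = [x - rF f] := by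
  apply ap_injective f
  rw [show ap f (ap f⁻¹ [x]) = [x] by
    have := ap_inv_ap f⁻¹ [x]; simpa [inv_inv] using this]
  rw [hf (x - rF f), sub_add_cancel]

lemma rF_inv (hf : Rot0 f) : rF f⁻¹ = - rF f := by
  rw [rF, ap_inv_rot0 hf 0, zero_sub]
  rfl

lemma Rot0_inv (hf : Rot0 f) : Rot0 f⁻¹ := by
  intro x
  rw [ap_inv_rot0 hf x, rF_inv hf, sub_eq_add_neg]

lemma sec_inv_vertex (hf : Rot0 f) (u : ZMod p) :
    sectionAt p f⁻¹ [u] = (sectionAt p f [u - rF f])⁻¹ := by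
  have h : ap f [u - rF f] = [u] := by rw [hf (u - rF f), sub_add_cancel]
  rw [← h, sectionAt_inv]

lemma Rot1_inv (hf0 : Rot0 f) (hf1 : Rot1 f) : Rot1 f⁻¹ := by
  intro u
  rw [sec_inv_vertex hf0 u]
  exact Rot0_inv (hf1 _)

lemma Rot2_inv (hf0 : Rot0 f) (hf1 : Rot1 f) (hf2 : Rot2 f) : Rot2 f⁻¹ := by
  intro u
  rw [sec_inv_vertex hf0 u]
  exact Rot1_inv (hf1 _) (hf2 _)

lemma Nice_inv (hf : Nice f) : Nice f⁻¹ :=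
  ⟨Rot0_inv hf.1, Rot1_inv hf.1 hf.2.1, Rot2_inv hf.1 hf.2.1 hf.2.2⟩

lemma rF_inv' (hf : Nice f) : rF f⁻¹ = - rF f := rF_inv hf.1

lemma BF_inv [NeZero p] (hf : Nice f) : BF f⁻¹ = - BF f := by
  have h := BF_mul (Rot1_inv hf.1 hf.2.1) hf.1 hf.2.1
  rw [inv_mul_cancel, BF_one] at h
  exact eq_neg_of_add_eq_zero_left h.symm

lemma B2F_inv [NeZero p] (hf : Nice f) : B2F f⁻¹ = - B2F f := by
  have h := B2F_mul (Nice_inv hf) hf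
  rw [inv_mul_cancel, B2F_one] at h
  exact eq_neg_of_add_eq_zero_left h.symm

/-! ### the generators -/

section gens
variable [NeZero p] (e : Fin (p - 1) → ZMod p)

/-- elements acting like `addFirst c` -/
lemma addlike_props {c : ZMod p} {f : ↥(AutT p)} (hf : ∀ v, ap f v = addFirst p c v) :
    rF f = c ∧ Rot0 f ∧ (∀ u : ZMod p, sectionAt p f [u] = 1) := by
  have hr : rF f = c := by
    rw [rF, hf [0]]
    show 0 + c = c
    rw [zero_add]
  refine ⟨hr, fun x => by rw [hf [x], hr]; rfl, fun u => ?_⟩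
  apply Subtype.ext; apply Equiv.ext; intro v
  show ap (sectionAt p f [u]) v = ap 1 v
  rw [sec_apply, hf (([u] : List (ZMod p)) ++ v), ap_one]
  rfl

lemma ap_aA_pow (n : ℕ) : ∀ v : List (ZMod p),
    ap (aA p ^ n) v = addFirst p (n : ZMod p) v := by
  induction n with
  | zero => intro v; rw [pow_zero, ap_one, Nat.cast_zero, addFirst_zero]
  | succ n ih =>
    intro v
    rw [pow_succ, ap_mul, show ap (aA p) v = addFirst p 1 v from rfl,
      ih (addFirst p 1 v), addFirst_addFirst]
    congr 1
    push_cast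
    ring

lemma ap_aZ (k : ZMod p) (v : List (ZMod p)) : ap (aZ p k) v = addFirst p k v := by
  rw [aZ, ap_aA_pow, ZMod.natCast_rightInverse k]

lemma rF_aZ (k : ZMod p) : rF (aZ p k) = k := (addlike_props (ap_aZ k)).1

lemma Rot0_aZ (k : ZMod p) : Rot0 (aZ p k) := (addlike_props (ap_aZ k)).2.1

lemma sec_aZ (k : ZMod p) (u : ZMod p) : sectionAt p (aZ p k) [u] = 1 :=
  (addlike_props (ap_aZ k)).2.2 u

lemma sF_aZ (k u : ZMod p) : sF (aZ p k) u = 0 := by rw [sF, sec_aZ, rF_one]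

lemma Rot1_aZ (k : ZMod p) : Rot1 (aZ p k) := fun u => by rw [sec_aZ]; exact Rot0_one

lemma Rot2_aZ (k : ZMod p) : Rot2 (aZ p k) := fun u => by rw [sec_aZ]; exact Rot1_one

lemma Nice_aZ (k : ZMod p) : Nice (aZ p k) := ⟨Rot0_aZ k, Rot1_aZ k, Rot2_aZ k⟩

lemma BF_aZ (k : ZMod p) : BF (aZ p k) = 0 := by simp [BF, sF_aZ]

lemma S2F_aZ (k u : ZMod p) : S2F (aZ p k) u = 0 := by rw [S2F, sec_aZ, BF_one]

lemma B2F_aZ (k : ZMod p) : B2F (aZ p k) = 0 := by simp [B2F, S2F_aZ]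

/-- the defining vector re-indexed by `ZMod p` -/
def eZf (j : ZMod p) : ZMod p :=
  if h : j.val = 0 then 0
  else e ⟨j.val - 1, by have := ZMod.val_lt j; omega⟩

lemma eZf_zero : eZf e 0 = 0 := by
  simp [eZf]

/-- `λ = e₁ + ⋯ + e_{p-1}` as a sum over `ZMod p` -/
def Lval : ZMod p := ∑ j : ZMod p, eZf e j

lemma ap_bA_single (x : ZMod p) : ap (bA p e) [x] = [x] := by
  show bFun p e [x] = [x]
  rw [show ([x] : List (ZMod p)) = x :: [] from rfl, bFun_cons]
  split <;> rfl

lemma rF_bA : rF (bA p e) = 0 := by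
  rw [rF, ap_bA_single]; rfl

lemma Rot0_bA : Rot0 (bA p e) := by
  intro x; rw [ap_bA_single, rF_bA, add_zero]

lemma sec_bA (u : ZMod p) :
    sectionAt p (bA p e) [u] = if u.val = 0 then bA p e else aZ p (eZf e u) := by
  apply Subtype.ext; apply Equiv.ext; intro v
  show ap (sectionAt p (bA p e) [u]) v = _
  rw [sec_apply, show ap (bA p e) (([u] : List (ZMod p)) ++ v) = bFun p e (u :: v) from rfl,
    bFun_cons]
  by_cases h : u.val = 0
  · rw [dif_pos h, if_pos h]
    rfl
  · rw [dif_neg h, if_neg h]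
    show addFirst p _ v = ap (aZ p (eZf e u)) v
    rw [ap_aZ, eZf, dif_neg h]

lemma sF_bA (u : ZMod p) : sF (bA p e) u = eZf e u := by
  rw [sF, sec_bA]
  by_cases h : u.val = 0
  · rw [if_pos h, rF_bA]
    rw [eZf, dif_pos h]
  · rw [if_neg h, rF_aZ]

lemma Rot1_bA : Rot1 (bA p e) := by
  intro u
  rw [sec_bA]
  split
  · exact Rot0_bA e
  · exact Rot0_aZ _

lemma Rot2_bA : Rot2 (bA p e) := by
  intro u
  rw [sec_bA]
  split
  · exact Rot1_bA e
  · exact Rot1_aZ _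

lemma Nice_bA : Nice (bA p e) := ⟨Rot0_bA e, Rot1_bA e, Rot2_bA e⟩

lemma BF_bA : BF (bA p e) = Lval e := by
  rw [BF, Lval]
  exact Finset.sum_congr rfl (fun u _ => sF_bA e u)

lemma S2F_bA (u : ZMod p) : S2F (bA p e) u = if u = 0 then Lval e else 0 := by
  rw [S2F, sec_bA]
  by_cases h : u.val = 0
  · rw [if_pos h, BF_bA, if_pos ((ZMod.val_eq_zero u).mp h)]
  · rw [if_neg h, BF_aZ, if_neg (fun hc => h (by rw [hc]; exact ZMod.val_zero))]

lemma B2F_bA : B2F (bA p e) = Lval e := by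
  rw [B2F, Finset.sum_congr rfl (fun u _ => S2F_bA e u), Finset.sum_ite_eq' Finset.univ 0
    (fun _ => Lval e)]
  simp

/-! ### the invariant `δ` -/

/-- `δ_u(f) = λ n_u(f) − ∑_j e_j λ m_{u−j}(f)` -/
def dF (f : ↥(AutT p)) (u : ZMod p) : ZMod p :=
  Lval e * sF f u - ∑ j : ZMod p, eZf e j * S2F f (u - j)

lemma dF_one (u : ZMod p) : dF e (1 : ↥(AutT p)) u = 0 := by
  simp [dF, sF_one, S2F_one]

lemma dF_mul {f g : ↥(AutT p)} (hf : Nice f) (hg : Nice g) (u : ZMod p) :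
    dF e (f * g) u = dF e f (u + rF g) + dF e g u := by
  rw [dF, dF, dF, sF_mul hf.2.1 hg.1 hg.2.1]
  have hS : ∀ j : ZMod p, S2F (f * g) (u - j) =
      S2F f (u + rF g - j) + S2F g (u - j) := by
    intro j
    rw [S2F_mul hf.2.2 hf.2.1 hg.1 hg.2.1 hg.2.2 (u - j)]
    congr 1
    ring_nf
  rw [Finset.sum_congr rfl (fun j _ => by rw [hS j, mul_add])]
  rw [Finset.sum_add_distrib]
  ring

lemma dF_aZ (k : ZMod p) (u : ZMod p) : dF e (aZ p k) u = 0 := by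
  simp [dF, sF_aZ, S2F_aZ]

lemma dF_bA (u : ZMod p) : dF e (bA p e) u = 0 := by
  rw [dF, sF_bA]
  have : ∀ j : ZMod p, eZf e j * S2F (bA p e) (u - j) =
      if j = u then eZf e u * Lval e else 0 := by
    intro j
    rw [S2F_bA]
    by_cases h : j = u
    · subst h
      rw [sub_self, if_pos rfl, if_pos rfl]
    · rw [if_neg (fun hc => h ((sub_eq_zero.mp hc).symm)), mul_zero, if_neg h]
  rw [Finset.sum_congr rfl (fun j _ => this j)]
  simp [mul_comm]

end gens

section grp
variable [NeZero p] (e : Fin (p - 1) → ZMod p)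

lemma ap_aA' (v : List (ZMod p)) : ap (aA p) v = addFirst p 1 v := rfl

lemma sec_aA (u : ZMod p) : sectionAt p (aA p) [u] = 1 :=
  (addlike_props (fun v => ap_aA' v)).2.2 u

lemma Nice_aA : Nice (aA p) := by
  obtain ⟨-, h0, hsec⟩ := addlike_props (fun v => ap_aA' (p := p) v)
  exact ⟨h0, fun u => by rw [hsec]; exact Rot0_one, fun u => by rw [hsec]; exact Rot1_one⟩

lemma sF_aA (u : ZMod p) : sF (aA p) u = 0 := by rw [sF, sec_aA, rF_one]

lemma S2F_aA (u : ZMod p) : S2F (aA p) u = 0 := by rw [S2F, sec_aA, BF_one]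

lemma dF_aA (u : ZMod p) : dF e (aA p) u = 0 := by
  simp [dF, sF_aA, S2F_aA]

/-- the subgroup of nice automorphisms with vanishing `δ` -/
def Kgrp : Subgroup ↥(AutT p) where
  carrier := {f | Nice f ∧ ∀ u : ZMod p, dF e f u = 0}
  one_mem' := ⟨Nice_one, dF_one e⟩
  mul_mem' := by
    rintro f g ⟨hf, hdf⟩ ⟨hg, hdg⟩
    exact ⟨Nice_mul hf hg, fun u => by rw [dF_mul e hf hg, hdf, hdg, add_zero]⟩
  inv_mem' := by
    rintro f ⟨hf, hdf⟩
    refine ⟨Nice_inv hf, fun u => ?_⟩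
    have h := dF_mul e (Nice_inv hf) hf ((u - rF f))
    rw [inv_mul_cancel, dF_one, hdf, add_zero, sub_add_cancel] at h
    exact h.symm

lemma ggs_le_Kgrp : GGS p e ≤ Kgrp e := by
  rw [GGS]
  apply (Subgroup.closure_le _).mpr
  rintro f (rfl | rfl)
  · exact ⟨Nice_aA, dF_aA e⟩
  · exact ⟨Nice_bA e, dF_bA e⟩

lemma Nice_of_mem {f : ↥(AutT p)} (hf : f ∈ GGS p e) : Nice f :=
  (ggs_le_Kgrp e hf).1

lemma dF_of_mem {f : ↥(AutT p)} (hf : f ∈ GGS p e) (u : ZMod p) : dF e f u = 0 :=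
  (ggs_le_Kgrp e hf).2 u

/-- the subgroup on which the abelianising invariants vanish -/
def Xgrp : Subgroup ↥(AutT p) where
  carrier := {f | Nice f ∧ rF f = 0 ∧ BF f = 0 ∧ B2F f = 0}
  one_mem' := ⟨Nice_one, rF_one, BF_one, B2F_one⟩
  mul_mem' := by
    rintro f g ⟨hf, hrf, hbf, hb2f⟩ ⟨hg, hrg, hbg, hb2g⟩
    refine ⟨Nice_mul hf hg, ?_, ?_, ?_⟩
    · rw [rF_mul hf.1 hg.1, hrf, hrg, add_zero]
    · rw [BF_mul hf.2.1 hg.1 hg.2.1, hbf, hbg, add_zero]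
    · rw [B2F_mul hf hg, hb2f, hb2g, add_zero]
  inv_mem' := by
    rintro f ⟨hf, hrf, hbf, hb2f⟩
    refine ⟨Nice_inv hf, ?_, ?_, ?_⟩
    · rw [rF_inv hf.1, hrf, neg_zero]
    · rw [BF_inv hf, hbf, neg_zero]
    · rw [B2F_inv hf, hb2f, neg_zero]

lemma commutator_le_Xgrp : ⁅GGS p e, GGS p e⁆ ≤ Xgrp := by
  apply Subgroup.commutator_le.mpr
  intro f hf g hg
  have Nf := Nice_of_mem e hf
  have Ng := Nice_of_mem e hg
  have Nfg := Nice_mul Nf Ng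
  have Nfgi := Nice_mul Nfg (Nice_inv Nf)
  rw [commutatorElement_def]
  refine ⟨Nice_mul Nfgi (Nice_inv Ng), ?_, ?_, ?_⟩
  · rw [rF_mul Nfgi.1 (Nice_inv Ng).1, rF_mul Nfg.1 (Nice_inv Nf).1,
      rF_mul Nf.1 Ng.1, rF_inv Nf.1, rF_inv Ng.1]
    ring
  · rw [BF_mul Nfgi.2.1 (Nice_inv Ng).1 (Nice_inv Ng).2.1,
      BF_mul Nfg.2.1 (Nice_inv Nf).1 (Nice_inv Nf).2.1,
      BF_mul Nf.2.1 Ng.1 Ng.2.1, BF_inv Nf, BF_inv Ng]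
    ring
  · rw [B2F_mul Nfgi (Nice_inv Ng), B2F_mul Nfg (Nice_inv Nf),
      B2F_mul Nf Ng, B2F_inv Nf, B2F_inv Ng]
    ring

lemma chi_of_comm {h : ↥(AutT p)} (hh : h ∈ ⁅GGS p e, GGS p e⁆) :
    Nice h ∧ rF h = 0 ∧ BF h = 0 ∧ B2F h = 0 := commutator_le_Xgrp e hh

/-! ### powers of `b` -/

lemma Nice_pow {f : ↥(AutT p)} (hf : Nice f) (n : ℕ) : Nice (f ^ n) := by
  induction n with
  | zero => rw [pow_zero]; exact Nice_one
  | succ n ih => rw [pow_succ]; exact Nice_mul ih hf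

lemma rF_bA_pow (n : ℕ) : rF (bA p e ^ n) = 0 := by
  induction n with
  | zero => rw [pow_zero, rF_one]
  | succ n ih =>
    rw [pow_succ, rF_mul (Nice_pow (Nice_bA e) n).1 (Nice_bA e).1, ih, rF_bA, add_zero]

lemma BF_bA_pow (n : ℕ) : BF (bA p e ^ n) = (n : ZMod p) * Lval e := by
  induction n with
  | zero => rw [pow_zero, BF_one, Nat.cast_zero, zero_mul]
  | succ n ih =>
    rw [pow_succ, BF_mul (Nice_pow (Nice_bA e) n).2.1 (Nice_bA e).1 (Nice_bA e).2.1,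
      ih, BF_bA]
    push_cast
    ring

lemma B2F_bA_pow (n : ℕ) : B2F (bA p e ^ n) = (n : ZMod p) * Lval e := by
  induction n with
  | zero => rw [pow_zero, B2F_one, Nat.cast_zero, zero_mul]
  | succ n ih =>
    rw [pow_succ, B2F_mul (Nice_pow (Nice_bA e) n) (Nice_bA e), ih, B2F_bA]
    push_cast
    ring

lemma Nice_bZ (t : ZMod p) : Nice (bZ p e t) := Nice_pow (Nice_bA e) t.val

lemma rF_bZ (t : ZMod p) : rF (bZ p e t) = 0 := rF_bA_pow e t.val

lemma BF_bZ (t : ZMod p) : BF (bZ p e t) = t * Lval e := by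
  rw [bZ, BF_bA_pow, ZMod.natCast_rightInverse t]

lemma B2F_bZ (t : ZMod p) : B2F (bZ p e t) = t * Lval e := by
  rw [bZ, B2F_bA_pow, ZMod.natCast_rightInverse t]

end grp

/-! ### the polynomial argument -/

open Polynomial in
lemma poly_contra (p : ℕ) [Fact p.Prime] (eZ m : ZMod p → ZMod p)
    (he0 : eZ 0 = 0) (t : ZMod p)
    (hLne : (∑ j : ZMod p, eZ j) ≠ 0)
    (ht : t ≠ 0) (hsum : ∑ u : ZMod p, m u = t)
    (hconv : ∀ u : ZMod p, ∑ j : ZMod p, eZ j * m (u - j) = (∑ j : ZMod p, eZ j) * m u) :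
    False := by
  haveI : NeZero p := ⟨(Fact.out : p.Prime).ne_zero⟩
  set L : ZMod p := ∑ j : ZMod p, eZ j with hLdef
  set R := Polynomial (ZMod p)
  set F : R := (∑ j : ZMod p, C (eZ j) * X ^ j.val) - C L with hF
  set M : R := ∑ u : ZMod p, C (m u) * X ^ u.val with hM
  -- Step 1 : X^p - 1 divides F * M
  have hdvd : ((X : R) ^ p - C 1) ∣ F * M := by
    set I : Ideal R := Ideal.span {(X : R) ^ p - C 1} with hI
    rw [← Ideal.mem_span_singleton, ← hI, ← Ideal.Quotient.eq_zero_iff_mem]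
    set π : R →+* R ⧸ I := Ideal.Quotient.mk I with hπ
    have hXp : (π X) ^ p = 1 := by
      have h0 : π ((X : R) ^ p - C 1) = 0 :=
        Ideal.Quotient.eq_zero_iff_mem.mpr (Ideal.subset_span (Set.mem_singleton _))
      rw [map_sub, map_pow, map_one, sub_eq_zero] at h0
      exact h0
    set ξ : ZMod p → R ⧸ I := fun u => (π X) ^ u.val with hξdef
    have hξ : ∀ u v : ZMod p, ξ u * ξ v = ξ (u + v) := by
      intro u v
      have hmod : u.val + v.val = p * ((u.val + v.val) / p) + (u + v).val := by
        rw [ZMod.val_add]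
        exact (Nat.div_add_mod _ p).symm
      rw [hξdef]
      dsimp only
      rw [← pow_add, hmod, pow_add, pow_mul, hXp, one_pow, one_mul]
    have hterm : ∀ a : ZMod p, ∀ k : ℕ, π (C a * X ^ k) = π (C a) * (π X) ^ k := by
      intro a k
      rw [map_mul, map_pow]
    have hπM : π M = ∑ u : ZMod p, π (C (m u)) * ξ u := by
      rw [hM, map_sum]
      exact Finset.sum_congr rfl (fun u _ => hterm _ _)
    have key : π (F * M) = 0 := by
      rw [map_mul, hF, map_sub, map_sum, hπM]
      have h1 : (∑ j : ZMod p, π (C (eZ j) * X ^ j.val)) =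
          ∑ j : ZMod p, π (C (eZ j)) * ξ j :=
        Finset.sum_congr rfl (fun j _ => hterm _ _)
      rw [h1, sub_mul, Finset.sum_mul]
      have h2 : ∀ j : ZMod p,
          (π (C (eZ j)) * ξ j) * (∑ u : ZMod p, π (C (m u)) * ξ u) =
          ∑ w : ZMod p, π (C (eZ j * m (w - j))) * ξ w := by
        intro j
        rw [Finset.mul_sum]
        apply Fintype.sum_equiv (Equiv.addLeft j)
        intro u
        show π (C (eZ j)) * ξ j * (π (C (m u)) * ξ u) = π (C (eZ j * m (j + u - j))) * ξ (j + u)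
        rw [add_sub_cancel_left, ← hξ, map_mul, map_mul]
        ring
      rw [Finset.sum_congr rfl (fun j _ => h2 j), Finset.sum_comm]
      have h3 : ∀ w : ZMod p,
          (∑ j : ZMod p, π (C (eZ j * m (w - j)))) = π (C (L * m w)) := by
        intro w
        rw [← map_sum, ← map_sum]
        congr 1
        rw [← hconv w]
      have h4 : (∑ w : ZMod p, ∑ j : ZMod p, π (C (eZ j * m (w - j))) * ξ w) =
          ∑ w : ZMod p, π (C (L * m w)) * ξ w := by
        refine Finset.sum_congr rfl (fun w _ => ?_)
        rw [← Finset.sum_mul, h3 w]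
      rw [h4, Finset.mul_sum]
      have h5 : ∀ w : ZMod p, π (C L) * (π (C (m w)) * ξ w) = π (C (L * m w)) * ξ w := by
        intro w
        rw [map_mul, map_mul]
        ring
      rw [Finset.sum_congr rfl (fun w _ => h5 w), sub_self]
    exact key
  -- Step 2 : the linear factor
  have hq : Prime ((X : R) - C 1) := Polynomial.prime_X_sub_C 1
  have hqp : ((X : R) - C 1) ^ p = (X : R) ^ p - C 1 := by
    rw [sub_pow_char]
    simp
  -- Step 3 : X - 1 does not divide M
  have hndvd : ¬ ((X : R) - C 1) ∣ M := by
    rw [Polynomial.dvd_iff_isRoot, Polynomial.IsRoot, hM]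
    intro h0
    apply ht
    rw [← hsum, ← h0, Polynomial.eval_finset_sum]
    refine (Finset.sum_congr rfl (fun u _ => ?_)).symm
    rw [Polynomial.eval_mul, Polynomial.eval_C, Polynomial.eval_pow, Polynomial.eval_X,
      one_pow, mul_one]
  -- Step 4 : (X-1)^p divides F
  have hdF : ((X : R) - C 1) ^ p ∣ F := by
    refine hq.pow_dvd_of_dvd_mul_right p hndvd ?_
    rw [hqp]
    exact hdvd
  -- Step 5 : F ≠ 0
  have hFeval : F.eval 0 = -L := by
    rw [hF, Polynomial.eval_sub, Polynomial.eval_C, Polynomial.eval_finset_sum]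
    have h6 : ∀ j : ZMod p, Polynomial.eval 0 (C (eZ j) * X ^ j.val) =
        if j = 0 then eZ j else 0 := by
      intro j
      rw [Polynomial.eval_mul, Polynomial.eval_C, Polynomial.eval_pow, Polynomial.eval_X]
      by_cases h : j = 0
      · rw [if_pos h, h, ZMod.val_zero, pow_zero, mul_one]
      · rw [if_neg h, zero_pow (fun hc => h ((ZMod.val_eq_zero j).mp hc)), mul_zero]
    rw [Finset.sum_congr rfl (fun j _ => h6 j), Finset.sum_ite_eq' Finset.univ 0 eZ]
    simp [he0]
  have hFne : F ≠ 0 := by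
    intro h
    rw [h, Polynomial.eval_zero] at hFeval
    exact hLne (by rw [← neg_neg L, ← hFeval, neg_zero])
  -- Step 6 : degree bound
  have hdeg : F.natDegree ≤ p - 1 := by
    rw [hF]
    refine le_trans (Polynomial.natDegree_sub_le _ _) (max_le ?_ ?_)
    · refine Polynomial.natDegree_sum_le_of_forall_le _ _ (fun j _ => ?_)
      refine le_trans (Polynomial.natDegree_C_mul_le _ _) ?_
      rw [Polynomial.natDegree_X_pow]
      have := ZMod.val_lt j
      omega
    · rw [Polynomial.natDegree_C]
      omega
  -- Step 7 : contradiction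
  have hple := Polynomial.natDegree_le_of_dvd hdF hFne
  rw [hqp, Polynomial.natDegree_X_pow_sub_C] at hple
  have hp2 := (Fact.out : p.Prime).two_le
  omega

/-! ### index conversion -/

lemma Lval_eq (p : ℕ) [NeZero p] (e : Fin (p - 1) → ZMod p) :
    Lval e = ∑ i : Fin (p - 1), e i := by
  have hp : 1 ≤ p := Nat.one_le_iff_ne_zero.mpr (NeZero.ne p)
  rw [Lval]
  rw [← Finset.add_sum_erase Finset.univ (eZf e) (Finset.mem_univ 0), eZf_zero, zero_add]
  symm
  refine Finset.sum_bij (fun (i : Fin (p - 1)) _ => (((i : ℕ) + 1 : ℕ) : ZMod p)) ?_ ?_ ?_ ?_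
  · intro i _
    refine Finset.mem_erase.mpr ⟨?_, Finset.mem_univ _⟩
    intro hc
    have hval : ((((i : ℕ) + 1 : ℕ) : ZMod p)).val = (i : ℕ) + 1 :=
      ZMod.val_cast_of_lt (by have := i.isLt; omega)
    rw [hc, ZMod.val_zero] at hval
    omega
  · intro i _ j _ hij
    have hi : ((((i : ℕ) + 1 : ℕ) : ZMod p)).val = (i : ℕ) + 1 :=
      ZMod.val_cast_of_lt (by have := i.isLt; omega)
    have hj : ((((j : ℕ) + 1 : ℕ) : ZMod p)).val = (j : ℕ) + 1 :=
      ZMod.val_cast_of_lt (by have := j.isLt; omega)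
    apply Fin.ext
    rw [hij] at hi
    rw [hj] at hi
    omega
  · intro b hb
    obtain ⟨hb0, -⟩ := Finset.mem_erase.mp hb
    have hbv : b.val ≠ 0 := fun hc => hb0 ((ZMod.val_eq_zero b).mp hc)
    have hblt := ZMod.val_lt b
    refine ⟨⟨b.val - 1, by omega⟩, Finset.mem_univ _, ?_⟩
    show (((b.val - 1) + 1 : ℕ) : ZMod p) = b
    rw [show b.val - 1 + 1 = b.val by omega]
    exact ZMod.natCast_rightInverse b
  · intro i _
    have hval : ((((i : ℕ) + 1 : ℕ) : ZMod p)).val = (i : ℕ) + 1 :=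
      ZMod.val_cast_of_lt (by have := i.isLt; omega)
    rw [eZf, dif_neg (by rw [hval]; omega)]
    congr 1
    apply Fin.ext
    show (i : ℕ) = _ - 1
    rw [hval]
    omega

/-! ### the combinatorial heart -/

lemma combo (p : ℕ) [Fact p.Prime] (eZ n m : ZMod p → ZMod p) (he0 : eZ 0 = 0)
    (hL : (∑ j : ZMod p, eZ j) ≠ 0) (t : ZMod p) (ht : t ≠ 0)
    (hmt : ∑ u : ZMod p, m u = t)
    (hc : ∀ u : ZMod p, n u = ∑ j : ZMod p, eZ j * m (u - j))
    (hA : ¬ ∃ u : ZMod p, n u = 0 ∧ m u ≠ 0) :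
    (∃ u₁ u₂ : ZMod p, u₁ ≠ u₂ ∧ n u₁ ≠ (∑ j : ZMod p, eZ j) * m u₁ ∧
        n u₂ ≠ (∑ j : ZMod p, eZ j) * m u₂) ∧
    (∃ v₁ v₂ : ZMod p, v₁ ≠ v₂ ∧ m v₁ ≠ 0 ∧ m v₂ ≠ 0) := by
  haveI : NeZero p := ⟨(Fact.out : p.Prime).ne_zero⟩
  have hnsum : ∑ u : ZMod p, n u = (∑ j : ZMod p, eZ j) * t := by
    rw [Finset.sum_congr rfl (fun u (_ : u ∈ Finset.univ) => hc u), Finset.sum_comm]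
    have h1 : ∀ j : ZMod p, ∑ u : ZMod p, eZ j * m (u - j) = eZ j * t := by
      intro j
      rw [← Finset.mul_sum]
      congr 1
      rw [← hmt]
      exact Fintype.sum_equiv (Equiv.subRight j) _ _ (fun u => rfl)
    rw [Finset.sum_congr rfl (fun j _ => h1 j), ← Finset.sum_mul]
  constructor
  · -- two vertices with n ≠ λ m
    have hu1 : ∃ u, n u ≠ (∑ j : ZMod p, eZ j) * m u := by
      by_contra h
      push_neg at h
      exact poly_contra p eZ m he0 t hL ht hmt (fun u => by rw [← hc u, h u])
    obtain ⟨u₁, hu₁⟩ := hu1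
    have hu2 : ∃ u₂, u₂ ≠ u₁ ∧ n u₂ ≠ (∑ j : ZMod p, eZ j) * m u₂ := by
      by_contra h
      push_neg at h
      apply hu₁
      have hsum0 : ∑ u : ZMod p, (n u - (∑ j : ZMod p, eZ j) * m u) = 0 := by
        rw [Finset.sum_sub_distrib, hnsum, ← Finset.mul_sum, hmt, sub_self]
      have heq : ∑ u : ZMod p, (n u - (∑ j : ZMod p, eZ j) * m u) =
          n u₁ - (∑ j : ZMod p, eZ j) * m u₁ :=
        Finset.sum_eq_single u₁ (fun u _ hne => by rw [h u hne, sub_self])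
          (fun hmem => absurd (Finset.mem_univ u₁) hmem)
      rw [heq] at hsum0
      exact sub_eq_zero.mp hsum0
    obtain ⟨u₂, hne, hu₂⟩ := hu2
    exact ⟨u₁, u₂, hne.symm, hu₁, hu₂⟩
  · -- two vertices with m ≠ 0
    have hv1 : ∃ v, m v ≠ 0 := by
      by_contra h
      push_neg at h
      apply ht
      rw [← hmt]
      exact Finset.sum_eq_zero (fun u _ => h u)
    obtain ⟨v₁, hv₁⟩ := hv1
    have hv2 : ∃ v₂, v₂ ≠ v₁ ∧ m v₂ ≠ 0 := by
      by_contra h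
      push_neg at h
      apply hA
      refine ⟨v₁, ?_, hv₁⟩
      rw [hc v₁]
      apply Finset.sum_eq_zero
      intro j _
      by_cases hj : j = 0
      · rw [hj, he0, zero_mul]
      · rw [h (v₁ - j) (fun hh => hj (sub_eq_self.mp hh)), mul_zero]
    obtain ⟨v₂, hne, hv₂⟩ := hv2
    exact ⟨v₁, v₂, hne.symm, hv₁, hv₂⟩

end GGSAux

/-- **Lemma 5.1.** Let `G` be a non-torsion GGS-group (`λ = e₁ + ⋯ + e_{p-1} ≠ 0`) and
`g ∈ G` with `g ≡_{G'} b^t`, `t ≠ 0`. For `u ∈ X` write `φ_u(g) ≡_{G'} a^{n_u} b^{m_u}`.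
Then exactly one of the following holds:
(1) there are `u ∈ X` and `j₀ ≠ 0` with `φ_u(g) ≡_{G'} b^{j₀}`;
(2) whenever `m_u ≠ 0` also `n_u ≠ 0`; there are two vertices `u₁ ≠ u₂` with
`n_{u_k} ≠ λ m_{u_k}`; and there are two vertices `v₁ ≠ v₂` with `m_{v₁}, m_{v₂} ≠ 0`. -/
theorem ggs_split_cases
    (p : ℕ) [Fact p.Prime] (hodd : Odd p)
    (e : Fin (p - 1) → ZMod p) (he : e ≠ 0) (hlam : ∑ i, e i ≠ 0)
    (g : ↥(AutT p)) (hg : g ∈ GGS p e)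
    (t : ZMod p) (ht : t ≠ 0)
    (hgt : g * (bZ p e t)⁻¹ ∈ ⁅GGS p e, GGS p e⁆)
    (n m : ZMod p → ZMod p)
    (hnm : ∀ u : ZMod p,
      sectionAt p g [u] * (aZ p (n u) * bZ p e (m u))⁻¹ ∈ ⁅GGS p e, GGS p e⁆) :
    Xor'
      (∃ u j₀ : ZMod p, j₀ ≠ 0 ∧
        sectionAt p g [u] * (bZ p e j₀)⁻¹ ∈ ⁅GGS p e, GGS p e⁆)
      ((∀ u : ZMod p, m u ≠ 0 → n u ≠ 0) ∧
        (∃ u₁ u₂ : ZMod p, u₁ ≠ u₂ ∧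
          n u₁ ≠ (∑ i, e i) * m u₁ ∧ n u₂ ≠ (∑ i, e i) * m u₂) ∧
        (∃ v₁ v₂ : ZMod p, v₁ ≠ v₂ ∧ m v₁ ≠ 0 ∧ m v₂ ≠ 0)) := by
  haveI : NeZero p := ⟨(Fact.out : p.Prime).ne_zero⟩
  classical
  open GGSAux in
  clear he hodd
  -- abbreviations
  have hLe : GGSAux.Lval e = ∑ i, e i := GGSAux.Lval_eq p e
  have hL : GGSAux.Lval e ≠ 0 := by rw [hLe]; exact hlam
  have Ng : GGSAux.Nice g := GGSAux.Nice_of_mem e hg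
  have Xgt := GGSAux.chi_of_comm e hgt
  have Nbt := GGSAux.Nice_bZ e t
  -- global invariants of g
  have hBFg : GGSAux.BF g = t * GGSAux.Lval e := by
    conv_lhs => rw [← inv_mul_cancel_right g (bZ p e t)]
    rw [GGSAux.BF_mul Xgt.1.2.1 Nbt.1 Nbt.2.1, Xgt.2.2.1, GGSAux.BF_bZ, zero_add]
  have hB2Fg : GGSAux.B2F g = t * GGSAux.Lval e := by
    conv_lhs => rw [← inv_mul_cancel_right g (bZ p e t)]
    rw [GGSAux.B2F_mul Xgt.1 Nbt, Xgt.2.2.2, GGSAux.B2F_bZ, zero_add]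
  -- sectionwise invariants
  have hsf : ∀ u : ZMod p, GGSAux.sF g u = n u := by
    intro u
    have Xu := GGSAux.chi_of_comm e (hnm u)
    have Na := GGSAux.Nice_aZ (p := p) (n u)
    have Nb := GGSAux.Nice_bZ e (m u)
    show GGSAux.rF (sectionAt p g [u]) = n u
    conv_lhs => rw [← inv_mul_cancel_right (sectionAt p g [u]) (aZ p (n u) * bZ p e (m u))]
    rw [GGSAux.rF_mul Xu.1.1 (GGSAux.Nice_mul Na Nb).1, Xu.2.1,
      GGSAux.rF_mul Na.1 Nb.1, GGSAux.rF_aZ, GGSAux.rF_bZ, zero_add, add_zero]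
  have hS2 : ∀ u : ZMod p, GGSAux.S2F g u = GGSAux.Lval e * m u := by
    intro u
    have Xu := GGSAux.chi_of_comm e (hnm u)
    have Na := GGSAux.Nice_aZ (p := p) (n u)
    have Nb := GGSAux.Nice_bZ e (m u)
    show GGSAux.BF (sectionAt p g [u]) = GGSAux.Lval e * m u
    conv_lhs => rw [← inv_mul_cancel_right (sectionAt p g [u]) (aZ p (n u) * bZ p e (m u))]
    rw [GGSAux.BF_mul Xu.1.2.1 (GGSAux.Nice_mul Na Nb).1 (GGSAux.Nice_mul Na Nb).2.1,
      Xu.2.2.1, GGSAux.BF_mul Na.2.1 Nb.1 Nb.2.1, GGSAux.BF_aZ, GGSAux.BF_bZ,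
      zero_add, zero_add, mul_comm]
  -- the convolution identity
  have hconv : ∀ u : ZMod p, n u = ∑ j : ZMod p, GGSAux.eZf e j * m (u - j) := by
    intro u
    have hd := GGSAux.dF_of_mem e hg u
    rw [GGSAux.dF, hsf u, sub_eq_zero] at hd
    apply mul_left_cancel₀ hL
    rw [hd]
    rw [Finset.mul_sum]
    refine Finset.sum_congr rfl (fun j _ => ?_)
    rw [hS2 (u - j)]
    ring
  -- the sum identity
  have hmt : ∑ u : ZMod p, m u = t := by
    have h1 : GGSAux.B2F g = GGSAux.Lval e * ∑ u : ZMod p, m u := by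
      rw [GGSAux.B2F, Finset.sum_congr rfl (fun u (_ : u ∈ Finset.univ) => hS2 u),
        Finset.mul_sum]
    rw [hB2Fg] at h1
    apply mul_left_cancel₀ hL
    rw [← h1]
    ring
  -- translation of alternative (1)
  have hiff : (∃ u j₀ : ZMod p, j₀ ≠ 0 ∧
      sectionAt p g [u] * (bZ p e j₀)⁻¹ ∈ ⁅GGS p e, GGS p e⁆) ↔
      ∃ u : ZMod p, n u = 0 ∧ m u ≠ 0 := by
    constructor
    · rintro ⟨u, j₀, hj₀, hmem⟩
      have Xu := GGSAux.chi_of_comm e hmem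
      have Nb := GGSAux.Nice_bZ e j₀
      have h1 : GGSAux.rF (sectionAt p g [u]) = 0 := by
        conv_lhs => rw [← inv_mul_cancel_right (sectionAt p g [u]) (bZ p e j₀)]
        rw [GGSAux.rF_mul Xu.1.1 Nb.1, Xu.2.1, GGSAux.rF_bZ, add_zero]
      have h2 : GGSAux.BF (sectionAt p g [u]) = j₀ * GGSAux.Lval e := by
        conv_lhs => rw [← inv_mul_cancel_right (sectionAt p g [u]) (bZ p e j₀)]
        rw [GGSAux.BF_mul Xu.1.2.1 Nb.1 Nb.2.1, Xu.2.2.1, GGSAux.BF_bZ, zero_add]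
      have hn0 : n u = 0 := by rw [← hsf u]; exact h1
      have hm : GGSAux.Lval e * m u = j₀ * GGSAux.Lval e := by rw [← hS2 u]; exact h2
      refine ⟨u, hn0, ?_⟩
      intro hc
      rw [hc, mul_zero] at hm
      exact hj₀ (by
        have := hm.symm
        rcases mul_eq_zero.mp this with h | h
        · exact h
        · exact absurd h hL)
    · rintro ⟨u, hnu, hmu⟩
      refine ⟨u, m u, hmu, ?_⟩
      have hmem := hnm u
      rw [hnu] at hmem
      have haZ : aZ p (0 : ZMod p) = 1 := by
        rw [aZ, ZMod.val_zero, pow_zero]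
      rw [haZ, one_mul] at hmem
      exact hmem
  -- final case split
  by_cases hA : ∃ u : ZMod p, n u = 0 ∧ m u ≠ 0
  · left
    refine ⟨hiff.mpr hA, ?_⟩
    rintro ⟨hB1, -, -⟩
    obtain ⟨u, h1, h2⟩ := hA
    exact hB1 u h2 h1
  · right
    have hconv' : ∀ u : ZMod p, n u = ∑ j : ZMod p, GGSAux.eZf e j * m (u - j) := hconv
    have hLsum : (∑ j : ZMod p, GGSAux.eZf e j) = GGSAux.Lval e := rfl
    obtain ⟨⟨u₁, u₂, h12, hn1, hn2⟩, ⟨v₁, v₂, hv, hm1, hm2⟩⟩ :=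
      GGSAux.combo p (GGSAux.eZf e) n m (GGSAux.eZf_zero e)
        (by rw [hLsum]; exact hL) t ht hmt (fun u => by rw [hconv' u]) hA
    refine ⟨⟨fun u hm hn0 => hA ⟨u, hn0, hm⟩, ⟨u₁, u₂, h12, ?_, ?_⟩,
      ⟨v₁, v₂, hv, hm1, hm2⟩⟩, fun h1' => hA (hiff.mp h1')⟩
    · rw [← hLe]; rw [hLsum] at hn1; exact hn1
    · rw [← hLe]; rw [hLsum] at hn2; exact hn2
end
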